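/- arXiv:1901.01607 — 12 statements merged into one kernel-verified Lean document; each statement's English description precedes it below -/
import Mathlib

section
/- Let f : ℝ → ℝ be a C^1 circle lift. Then liminf_{n→∞} (1/n) · sup_{x ∈ [0,1]} |log(deriv (f^[n]) x)| > 0 if and only if f has a hyperbolic periodic point, i.e. there exist x ∈ ℝ, an integer q ≥ 1 and an integer p such that f^[q] x = x + p and deriv (f^[q]) x ≠ 1. -/
/-!
Write `f' = exp φ`, so that `log (f^n)'` is the Birkhoff sum `S_n φ = ∑_{i<n} φ ∘ f^i`, with `φ`
continuous and `1`-periodic. If `f^q x = x + p` and `S_q φ x = λ ≠ 0`, then `S_{kq} φ x = kλ`,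
so `sup |S_n φ|` grows linearly.

Conversely, linear growth means that `S_m φ x ≤ -mc` happens for infinitely many `m`, or else the
same holds for `f⁻¹`, whose Birkhoff sums are those of `f` read backwards. A Pliss-type argument
and compactness give a point `z` with `S_k φ z ≤ -kc/2` for every `k`, and then infinitely many
iterates `f^j z` all of whose forward sums are uniformly negative. By uniform continuity of `φ`,
`f^n` contracts a whole interval around such a point exponentially. Take two such iterates that
are close modulo `1` and far apart in time: `f^m - p` maps an interval into itself, and its fixed
point is a periodic point with `(f^m)' < 1`.
-/

open Filter Function Topology

namespace Function.Periodic

theorem apply_fract {β : Type*} {g : ℝ → β} (h : Periodic g 1) (x : ℝ) :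
    g (Int.fract x) = g x := by
  have := h.sub_int_mul_eq (x := x) ⌊x⌋
  rwa [mul_one] at this

variable {g : ℝ → ℝ}

theorem exists_abs_le_of_continuous (h : Periodic g 1) (hg : Continuous g) :
    ∃ A, 0 < A ∧ ∀ x, |g x| ≤ A := by
  obtain ⟨A, hA⟩ := isBounded_iff_forall_norm_le.1 (h.isBounded_of_continuous one_ne_zero hg)
  exact ⟨max A 1, by positivity, fun x => (hA _ (Set.mem_range_self x)).trans (le_max_left _ _)⟩

theorem uniformContinuous_of_continuous (h : Periodic g 1) (hg : Continuous g) :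
    UniformContinuous g := by
  have hlift : UniformContinuous (h.lift : AddCircle (1 : ℝ) → ℝ) :=
    CompactSpace.uniformContinuous_of_continuous (continuous_coinduced_dom.mpr hg)
  have hmk : UniformContinuous (QuotientAddGroup.mk' (AddSubgroup.zmultiples (1 : ℝ))) :=
    AddMonoidHomClass.uniformContinuous_of_bound _ 1 fun x => by
      simpa only [QuotientAddGroup.mk'_apply, one_mul] using QuotientAddGroup.norm_mk_le_norm
  exact hlift.comp hmk

theorem abs_le_iSup_Icc (h : Periodic g 1) {B : ℝ} (hB : ∀ x, |g x| ≤ B) (x : ℝ) :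
    |g x| ≤ ⨆ y : Set.Icc (0 : ℝ) 1, |g y| := by
  rw [← h.apply_fract]
  exact le_ciSup (f := fun y : Set.Icc (0 : ℝ) 1 => |g y|) ⟨B, by rintro _ ⟨y, rfl⟩; exact hB y⟩
    ⟨Int.fract x, Int.fract_nonneg x, (Int.fract_lt_one x).le⟩

end Function.Periodic

theorem liminf_pos_of_linear_bounds {s : ℕ → ℝ} {a B C : ℝ} (ha : 0 < a)
    (hlow : ∀ n, n * a - C ≤ s n) (hup : ∀ n, s n ≤ n * B) :
    0 < liminf (fun n : ℕ => 1 / (n : ℝ) * s n) atTop := by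
  have hbdd : IsBoundedUnder (· ≤ ·) atTop fun n : ℕ => 1 / (n : ℝ) * s n :=
    isBoundedUnder_of_eventually_le <| (eventually_ge_atTop 1).mono fun n hn => by
      have hn : (0 : ℝ) < n := by exact_mod_cast hn
      rw [one_div_mul_eq_div, div_le_iff₀ hn, mul_comm]
      exact hup n
  have hlim : Tendsto (fun n : ℕ => a - C / n) atTop (𝓝 a) := by
    simpa using tendsto_const_nhds.sub (tendsto_const_div_atTop_nhds_zero_nat C)
  refine (half_pos ha).trans_le (le_liminf_of_le hbdd.isCoboundedUnder_ge ?_)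
  filter_upwards [hlim.eventually (eventually_ge_nhds (half_lt_self ha)), eventually_ge_atTop 1]
    with n hn hn1
  have hn1 : (0 : ℝ) < n := by exact_mod_cast hn1
  calc a / 2 ≤ a - C / n := hn
    _ = 1 / n * (n * a - C) := by field_simp
    _ ≤ 1 / n * s n := by gcongr; exact hlow n

theorem exists_pos_eventually_lt_of_liminf_pos {s : ℕ → ℝ} (hs : ∀ n, 0 ≤ s n)
    (h : 0 < liminf (fun n : ℕ => 1 / (n : ℝ) * s n) atTop) :
    ∃ c, 0 < c ∧ ∀ᶠ n : ℕ in atTop, n * c < s n := by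
  refine ⟨_, half_pos h, ?_⟩
  filter_upwards [eventually_lt_of_lt_liminf (half_lt_self h)
    (isBoundedUnder_of ⟨0, fun n => by have := hs n; positivity⟩)] with n hn
  have hn0 : (0 : ℝ) < n := Nat.cast_pos.2 <| Nat.pos_of_ne_zero fun h0 => by
    simp only [h0, Nat.cast_zero, div_zero, zero_mul] at hn
    linarith [half_pos h]
  rwa [one_div_mul_eq_div, lt_div_iff₀ hn0, mul_comm] at hn

theorem exists_add_le_abs_sub_intCast_lt {P : ℕ → Prop} (hP : ∃ᶠ j in atTop, P j) (s : ℕ → ℝ)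
    {ε : ℝ} (hε : 0 < ε) (K : ℕ) :
    ∃ a b : ℕ, P a ∧ a + K ≤ b ∧ ∃ p : ℤ, |s b - (s a + p)| < ε := by
  obtain ⟨e, he, hPe⟩ := extraction_of_frequently_atTop hP
  obtain ⟨L, -, ψ, hψ, hL⟩ := isCompact_Icc.tendsto_subseq (x := fun n => Int.fract (s (e n)))
    fun n => ⟨Int.fract_nonneg _, (Int.fract_lt_one _).le⟩
  obtain ⟨N, hN⟩ := Metric.cauchySeq_iff'.1 hL.cauchySeq ε hε
  refine ⟨e (ψ N), e (ψ (N + K)), hPe _, ?_, ⌊s (e (ψ (N + K)))⌋ - ⌊s (e (ψ N))⌋, ?_⟩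
  · simpa [add_comm] using (he.comp hψ).add_le_nat K N
  · have := hN (N + K) (Nat.le_add_right N K)
    rw [Real.dist_eq] at this
    simp only [comp_apply, Int.fract] at this
    push_cast
    convert this using 2
    ring

section BirkhoffSum

variable {α : Type*} {f : α → α} {φ : α → ℝ}

theorem abs_birkhoffSum_le (f : α → α) {A : ℝ} (hA : ∀ x, |φ x| ≤ A) (n : ℕ) (x : α) :
    |birkhoffSum f φ n x| ≤ n * A :=
  (Finset.abs_sum_le_sum_abs _ _).trans (by
    simpa using Finset.sum_le_sum (s := Finset.range n) fun i _ => hA (f^[i] x))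

/-- A Pliss-type lemma: `j` maximises `i ↦ S_i x + i c / 2` over `i ≤ m`. -/
theorem exists_birkhoffSum_iterate_le_of_birkhoffSum_le {A c : ℝ} (hc : 0 ≤ c)
    (hA : ∀ x, -A ≤ φ x) {m : ℕ} {x : α} (hm : birkhoffSum f φ m x ≤ -(m * c)) :
    ∃ j ≤ m, m * c ≤ 2 * (m - j) * A ∧
      ∀ k ≤ m - j, birkhoffSum f φ k (f^[j] x) ≤ -(k * (c / 2)) := by
  obtain ⟨j, hj, hmax⟩ := Finset.exists_max_image (Finset.range (m + 1))
    (fun i => birkhoffSum f φ i x + i * (c / 2)) ⟨0, by simp⟩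
  have hjm : j ≤ m := Nat.lt_succ_iff.1 (Finset.mem_range.1 hj)
  refine ⟨j, hjm, ?_, fun k hk => ?_⟩
  · have h0 := hmax 0 (by simp)
    have htail : -((m - j : ℕ) * A) ≤ birkhoffSum f φ (m - j) (f^[j] x) := by
      simpa [birkhoffSum, mul_comm] using
        Finset.card_nsmul_le_sum (Finset.range (m - j)) _ (-A) fun i _ => hA _
    have hsplit := birkhoffSum_add f φ j (m - j) x
    rw [Nat.add_sub_cancel' hjm] at hsplit
    have hjm' : (j : ℝ) ≤ m := by exact_mod_cast hjm
    push_cast [hjm] at htail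
    simp only [birkhoffSum_zero, CharP.cast_eq_zero, zero_mul, add_zero] at h0
    nlinarith
  · have h := hmax (j + k) (Finset.mem_range.2 (by omega))
    rw [birkhoffSum_add] at h
    push_cast at h
    linarith

/-- `j` maximises `i ↦ S_i z + i c / 2` on `[N, ∞)`; a maximum exists since it tends to `-∞`. -/
theorem frequently_forall_birkhoffSum_iterate_le {c : ℝ} (hc : 0 < c) {z : α}
    (hz : ∀ k, birkhoffSum f φ k z ≤ -(k * c)) :
    ∃ᶠ j in atTop, ∀ k, birkhoffSum f φ k (f^[j] z) ≤ -(k * (c / 2)) := by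
  refine frequently_atTop.2 fun N => ?_
  set t : ℕ → ℝ := fun i => birkhoffSum f φ (N + i) z + (N + i : ℕ) * (c / 2)
  have ht : Tendsto t cofinite atBot := by
    rw [Nat.cofinite_eq_atTop]
    refine tendsto_atBot_mono (fun i => ?_) (tendsto_neg_atTop_atBot.comp
      (tendsto_natCast_atTop_atTop.atTop_mul_const (half_pos hc)))
    have := hz (N + i)
    simp only [comp_apply, t]
    push_cast at this ⊢
    nlinarith [(N.cast_nonneg : (0 : ℝ) ≤ N)]
  obtain ⟨i, hi⟩ := ht.exists_forall_ge
  refine ⟨N + i, Nat.le_add_right N i, fun k => ?_⟩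
  have h := hi (i + k)
  simp only [t, ← add_assoc] at h
  rw [birkhoffSum_add f φ (N + i) k] at h
  push_cast at h
  linarith

theorem birkhoffSum_comp_iterate_of_leftInverse {G : Type*} [AddCommGroup G] {g : α → α}
    (hgf : LeftInverse g f) (ψ : α → G) (n : ℕ) (x : α) :
    birkhoffSum g (fun y => -ψ (g y)) n (f^[n] x) = -birkhoffSum f ψ n x := by
  induction n with
  | zero => simp
  | succ n ih =>
    rw [birkhoffSum_succ', iterate_succ_apply', hgf, ih, birkhoffSum_succ]
    abel

end BirkhoffSum

namespace CircleLift

variable {f φ : ℝ → ℝ}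

theorem periodic_of_hasDerivAt (hf : ∀ x, HasDerivAt f (Real.exp (φ x)) x)
    (hlift : ∀ x, f (x + 1) = f x + 1) : Periodic φ 1 := fun x => by
  have h₁ : HasDerivAt (fun y => f (y + 1)) (Real.exp (φ (x + 1))) x :=
    (hf (x + 1)).comp_add_const x 1
  have h₂ : HasDerivAt (fun y => f (y + 1)) (Real.exp (φ x)) x := by
    simpa only [hlift] using (hf x).add_const 1
  exact Real.exp_injective (h₁.unique h₂)

theorem hasDerivAt_iterate (hf : ∀ x, HasDerivAt f (Real.exp (φ x)) x) (n : ℕ) (x : ℝ) :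
    HasDerivAt f^[n] (Real.exp (birkhoffSum f φ n x)) x := by
  induction n generalizing x with
  | zero => simpa using hasDerivAt_id x
  | succ n ih =>
    rw [iterate_succ, birkhoffSum_succ', Real.exp_add, mul_comm]
    exact (ih (f x)).comp x (hf x)

theorem birkhoffSum_periodic (hlift : ∀ x, f (x + 1) = f x + 1) (hper : Periodic φ 1) (n : ℕ) :
    Periodic (birkhoffSum f φ n) 1 := fun x => by
  simp only [birkhoffSum, Commute.iterate_left (g := (· + (1 : ℝ))) hlift _ x, hper _]

theorem birkhoffSum_mul_of_iterate_eq_add (hlift : ∀ x, f (x + 1) = f x + 1)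
    (hper : Periodic φ 1) {q : ℕ} {p : ℤ} {x : ℝ} (hx : f^[q] x = x + p) (k : ℕ) :
    birkhoffSum f φ (k * q) x = k * birkhoffSum f φ q x := by
  induction k with
  | zero => simp
  | succ k ih =>
    have hshift := (birkhoffSum_periodic hlift hper (k * q)).int_mul p x
    rw [mul_one] at hshift
    rw [Nat.succ_mul, add_comm, birkhoffSum_add, hx, hshift, ih]
    push_cast
    ring

theorem liminf_pos_of_iterate_eq_add (hφ : Continuous φ) (hper : Periodic φ 1)
    (hlift : ∀ x, f (x + 1) = f x + 1) {x : ℝ} {q : ℕ} {p : ℤ} (hq : 0 < q)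
    (hx : f^[q] x = x + p) (hS : birkhoffSum f φ q x ≠ 0) :
    0 < liminf (fun n : ℕ => 1 / (n : ℝ) *
      ⨆ y : Set.Icc (0 : ℝ) 1, |birkhoffSum f φ n y|) atTop := by
  obtain ⟨A, hA0, hA⟩ := hper.exists_abs_le_of_continuous hφ
  set L := |birkhoffSum f φ q x|
  have hq' : (0 : ℝ) < q := by exact_mod_cast hq
  refine liminf_pos_of_linear_bounds (a := L / q) (C := L + q * A)
    (div_pos (abs_pos.2 hS) hq')
    (fun n => ?_) (fun n => ciSup_le fun y => abs_birkhoffSum_le f hA n y)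
  refine le_trans ?_ ((birkhoffSum_periodic hlift hper n).abs_le_iSup_Icc
    (abs_birkhoffSum_le f hA n) x)
  set k := n / q
  set r := n % q
  have hn : (n : ℝ) = q * k + r := by exact_mod_cast (Nat.div_add_mod n q).symm
  have hr : (r : ℝ) ≤ q := by exact_mod_cast (Nat.mod_lt n hq).le
  have hsplit := birkhoffSum_add f φ (k * q) r x
  rw [Nat.div_add_mod', birkhoffSum_mul_of_iterate_eq_add hlift hper hx] at hsplit
  have hrem := abs_birkhoffSum_le f hA r (f^[k * q] x)
  have hmain : k * L - r * A ≤ |birkhoffSum f φ n x| := by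
    rw [hsplit]
    have h := abs_add_le (k * birkhoffSum f φ q x + birkhoffSum f φ r (f^[k * q] x))
      (-birkhoffSum f φ r (f^[k * q] x))
    rw [abs_neg, add_neg_cancel_right, abs_mul, Nat.abs_cast] at h
    linarith
  have hnL : n * (L / q) = k * L + r * L / q := by rw [hn]; field_simp
  have hrL : r * L / q ≤ L := by
    rw [div_le_iff₀ hq', mul_comm L]
    exact mul_le_mul_of_nonneg_right hr (abs_nonneg _)
  nlinarith

theorem exists_forall_birkhoffSum_le (hfc : Continuous f) (hlift : ∀ x, f (x + 1) = f x + 1)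
    (hφ : Continuous φ) (hper : Periodic φ 1) {c : ℝ} (hc : 0 < c)
    (h : ∃ᶠ m in atTop, ∃ x, birkhoffSum f φ m x ≤ -(m * c)) :
    ∃ z, ∀ k, birkhoffSum f φ k z ≤ -(k * (c / 2)) := by
  obtain ⟨A, hA0, hA⟩ := hper.exists_abs_le_of_continuous hφ
  set T : ℕ → Set ℝ := fun L =>
    Set.Icc 0 1 ∩ {x | ∀ k ≤ L, birkhoffSum f φ k x ≤ -(k * (c / 2))}
  have hclosed : ∀ L, IsClosed (T L) := fun L => isClosed_Icc.inter <| by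
    simp only [Set.ofPred_forall]
    exact isClosed_iInter fun k => isClosed_iInter fun _ => isClosed_le
      (continuous_finsetSum _ fun i _ => hφ.comp (hfc.iterate i)) continuous_const
  have hne : ∀ L, (T L).Nonempty := by
    intro L
    obtain ⟨N, hN⟩ := exists_nat_ge (2 * L * A / c)
    obtain ⟨m, hm, x, hx⟩ := h.forall_exists_of_atTop N
    obtain ⟨j, hjm, hdens, hj⟩ := exists_birkhoffSum_iterate_le_of_birkhoffSum_le hc.le
      (fun x => neg_le_of_abs_le (hA x)) hx
    have hL : L ≤ m - j := by
      have hm' : (N : ℝ) ≤ m := by exact_mod_cast hm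
      rw [div_le_iff₀ hc] at hN
      have : ((L + j : ℕ) : ℝ) ≤ m := by push_cast; nlinarith
      have : L + j ≤ m := by exact_mod_cast this
      omega
    refine ⟨Int.fract (f^[j] x), ⟨Int.fract_nonneg _, (Int.fract_lt_one _).le⟩, fun k hk => ?_⟩
    rw [(birkhoffSum_periodic hlift hper k).apply_fract]
    exact hj k (hk.trans hL)
  obtain ⟨z, hz⟩ := IsCompact.nonempty_iInter_of_sequence_nonempty_isCompact_isClosed T
    (fun L => Set.inter_subset_inter_right _ fun x hx k hk => hx k (hk.trans L.le_succ)) hne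
    (isCompact_Icc.of_isClosed_subset (hclosed 0) Set.inter_subset_left) hclosed
  exact ⟨z, fun k => (Set.mem_iInter.1 hz k).2 k le_rfl⟩

theorem abs_iterate_sub_le (hf : ∀ x, HasDerivAt f (Real.exp (φ x)) x) {s : Set ℝ}
    (hs : Convex ℝ s) {n : ℕ} {B : ℝ} (hB : ∀ w ∈ s, birkhoffSum f φ n w ≤ B) {u v : ℝ}
    (hu : u ∈ s) (hv : v ∈ s) : |f^[n] u - f^[n] v| ≤ Real.exp B * |u - v| := by
  simpa only [Real.norm_eq_abs] using hs.norm_image_sub_le_of_norm_hasDerivWithin_le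
    (fun w _ => (hasDerivAt_iterate hf n w).hasDerivWithinAt)
    (fun w hw => by rw [Real.norm_of_nonneg (Real.exp_pos _).le]; exact Real.exp_le_exp.2 (hB w hw))
    hv hu

/-- The sums of length `i < k` are nonpositive on the interval, so `f^i` does not expand it and
the orbits of `w` and `y` stay `δ`-close up to time `k`. -/
theorem birkhoffSum_le_of_mem_Icc (hf : ∀ x, HasDerivAt f (Real.exp (φ x)) x) {c δ : ℝ}
    (hc : 0 ≤ c) (huc : ∀ u v, |u - v| ≤ δ → |φ u - φ v| ≤ c / 2) {y : ℝ}
    (hy : ∀ k, birkhoffSum f φ k y ≤ -(k * c)) (k : ℕ) :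
    ∀ w ∈ Set.Icc (y - δ) (y + δ), birkhoffSum f φ k w ≤ -(k * (c / 2)) := by
  induction k using Nat.strong_induction_on with
  | _ k ih =>
  intro w hw
  have hyI : y ∈ Set.Icc (y - δ) (y + δ) := ⟨by linarith [hw.1, hw.2], by linarith [hw.1, hw.2]⟩
  have hclose : ∀ i < k, |f^[i] w - f^[i] y| ≤ δ := fun i hi => by
    calc |f^[i] w - f^[i] y| ≤ Real.exp 0 * |w - y| :=
          abs_iterate_sub_le hf (convex_Icc _ _) (fun v hv => (ih i hi v hv).trans
            (neg_nonpos.2 (by positivity))) hw hyI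
      _ ≤ δ := by rw [Real.exp_zero, one_mul, abs_le]; constructor <;> linarith [hw.1, hw.2]
  calc birkhoffSum f φ k w ≤ ∑ i ∈ Finset.range k, (φ (f^[i] y) + c / 2) :=
        Finset.sum_le_sum fun i hi => by
          linarith [(abs_le.1 (huc _ _ (hclose i (Finset.mem_range.1 hi)))).2]
    _ = birkhoffSum f φ k y + k * (c / 2) := by
        simp [birkhoffSum, Finset.sum_add_distrib]
    _ ≤ -(k * (c / 2)) := by linarith [hy k]

theorem exists_iterate_eq_add_birkhoffSum_neg (hf : ∀ x, HasDerivAt f (Real.exp (φ x)) x)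
    {c δ : ℝ} (hc : 0 < c) (huc : ∀ u v, |u - v| ≤ δ → |φ u - φ v| ≤ c / 2) {y : ℝ}
    (hy : ∀ k, birkhoffSum f φ k y ≤ -(k * c)) {m : ℕ} (hm : Real.exp (-(m * (c / 2))) ≤ 1 / 2)
    {p : ℤ} (hp : |f^[m] y - (y + p)| ≤ δ / 2) :
    ∃ x, f^[m] x = x + p ∧ birkhoffSum f φ m x < 0 := by
  have hδ : 0 ≤ δ := by linarith [abs_nonneg (f^[m] y - (y + p))]
  have hyI : y ∈ Set.Icc (y - δ) (y + δ) := ⟨by linarith, by linarith⟩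
  have hS := birkhoffSum_le_of_mem_Icc hf hc.le huc hy m
  have hcont : Continuous fun w => f^[m] w - p :=
    ((continuous_iff_continuousAt.2 fun x => (hf x).continuousAt).iterate m).sub continuous_const
  have hmaps : Set.MapsTo (fun w => f^[m] w - p) (Set.Icc (y - δ) (y + δ))
      (Set.Icc (y - δ) (y + δ)) := by
    intro w hw
    have hwy : |w - y| ≤ δ := abs_le.2 ⟨by linarith [hw.1], by linarith [hw.2]⟩
    have hcontr := abs_iterate_sub_le hf (convex_Icc _ _) hS hw hyI
    have : |f^[m] w - p - y| ≤ δ :=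
      calc |f^[m] w - p - y| = |(f^[m] w - f^[m] y) + (f^[m] y - (y + p))| := by ring_nf
        _ ≤ 1 / 2 * δ + δ / 2 := (abs_add_le _ _).trans (add_le_add
            (hcontr.trans (mul_le_mul hm hwy (abs_nonneg _) (by norm_num))) hp)
        _ = δ := by ring
    rw [abs_le] at this
    exact ⟨by linarith [this.1], by linarith [this.2]⟩
  obtain ⟨x, hx, hfix⟩ := exists_mem_Icc_isFixedPt_of_mapsTo hcont.continuousOn
    (by linarith) hmaps
  refine ⟨x, by linarith [hfix.eq], (hS x hx).trans_lt ?_⟩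
  exact Real.exp_lt_one_iff.1 (hm.trans_lt (by norm_num))

theorem exists_iterate_eq_add_birkhoffSum_neg_of_frequently
    (hf : ∀ x, HasDerivAt f (Real.exp (φ x)) x) (hφ : Continuous φ)
    (hlift : ∀ x, f (x + 1) = f x + 1) {c : ℝ} (hc : 0 < c)
    (h : ∃ᶠ m in atTop, ∃ x, birkhoffSum f φ m x ≤ -(m * c)) :
    ∃ (x : ℝ) (q : ℕ) (p : ℤ), 0 < q ∧ f^[q] x = x + p ∧ birkhoffSum f φ q x < 0 := by
  have hper := periodic_of_hasDerivAt hf hlift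
  have hfc : Continuous f := continuous_iff_continuousAt.2 fun x => (hf x).continuousAt
  obtain ⟨z, hz⟩ := exists_forall_birkhoffSum_le hfc hlift hφ hper hc h
  have hrec := frequently_forall_birkhoffSum_iterate_le (half_pos hc) hz
  set c' := c / 2 / 2
  have hc' : 0 < c' := by positivity
  obtain ⟨δ, hδ, huc⟩ := Metric.uniformContinuous_iff.1
    (hper.uniformContinuous_of_continuous hφ) (c' / 2) (half_pos hc')
  have huc' : ∀ u v, |u - v| ≤ δ / 2 → |φ u - φ v| ≤ c' / 2 := fun u v huv =>
    (huc (by rw [Real.dist_eq]; linarith)).le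
  obtain ⟨K, hK⟩ := eventually_atTop.1 <| (Real.tendsto_exp_neg_atTop_nhds_zero.comp
    (tendsto_natCast_atTop_atTop.atTop_mul_const (half_pos hc'))).eventually
    (eventually_le_nhds (by norm_num : (0 : ℝ) < 1 / 2))
  obtain ⟨a, b, ha, hab, p, hp⟩ := exists_add_le_abs_sub_intCast_lt hrec (fun j => f^[j] z)
    (by positivity : 0 < δ / 2 / 2) K
  have hfm : f^[b - a] (f^[a] z) = f^[b] z := by
    rw [← iterate_add_apply, Nat.sub_add_cancel (by omega)]
  obtain ⟨x, hx, hS⟩ := exists_iterate_eq_add_birkhoffSum_neg hf hc' huc' ha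
    (hK (b - a) (by omega)) (by rw [hfm]; exact hp.le)
  exact ⟨x, b - a, p, Nat.pos_of_ne_zero fun h0 => by simp [h0] at hS, hx, hS⟩

theorem exists_leftInverse_hasDerivAt (hf : ∀ x, HasDerivAt f (Real.exp (φ x)) x)
    (hlift : ∀ x, f (x + 1) = f x + 1) :
    ∃ g : ℝ → ℝ, LeftInverse g f ∧ RightInverse g f ∧
      (∀ y, HasDerivAt g (Real.exp (-φ (g y))) y) ∧ ∀ y, g (y + 1) = g y + 1 := by
  have hfc : Continuous f := continuous_iff_continuousAt.2 fun x => (hf x).continuousAt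
  have hmono : StrictMono f := strictMono_of_deriv_pos fun x => (hf x).deriv ▸ Real.exp_pos _
  obtain ⟨B, -, hB⟩ := (show Periodic (fun x => f x - x) 1 from fun x => by
    simp only [hlift]; ring).exists_abs_le_of_continuous (hfc.sub continuous_id)
  have hsurj : Surjective f := hfc.surjective
    (tendsto_atTop_mono (fun x => by dsimp only [id]; linarith [(abs_le.1 (hB x)).1])
      (tendsto_atTop_add_const_right _ (-B) tendsto_id))
    (tendsto_atBot_mono (fun x => by dsimp only [id]; linarith [(abs_le.1 (hB x)).2])
      (tendsto_atBot_add_const_right _ B tendsto_id))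
  set e := hmono.orderIsoOfSurjective f hsurj
  have hfe : ∀ y, f (e.symm y) = y := StrictMono.orderIsoOfSurjective_self_symm_apply f hmono hsurj
  refine ⟨e.symm, StrictMono.orderIsoOfSurjective_symm_apply_self f hmono hsurj, hfe,
    fun y => ?_, fun y => hmono.injective ?_⟩
  · rw [Real.exp_neg]
    exact (hf (e.symm y)).of_local_left_inverse e.symm.continuous.continuousAt
      (Real.exp_pos _).ne' (Eventually.of_forall hfe)
  · rw [hfe, hlift, hfe]

theorem exists_iterate_eq_add_birkhoffSum_ne_zero_of_liminf_pos
    (hf : ∀ x, HasDerivAt f (Real.exp (φ x)) x) (hφ : Continuous φ)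
    (hlift : ∀ x, f (x + 1) = f x + 1)
    (h : 0 < liminf (fun n : ℕ => 1 / (n : ℝ) *
      ⨆ y : Set.Icc (0 : ℝ) 1, |birkhoffSum f φ n y|) atTop) :
    ∃ (x : ℝ) (q : ℕ) (p : ℤ), 0 < q ∧ f^[q] x = x + p ∧ birkhoffSum f φ q x ≠ 0 := by
  obtain ⟨c, hc, hev⟩ := exists_pos_eventually_lt_of_liminf_pos
    (fun n => Real.iSup_nonneg fun _ => abs_nonneg _) h
  have hfreq : ∃ᶠ n : ℕ in atTop, (∃ x, birkhoffSum f φ n x ≤ -(n * c)) ∨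
      ∃ x, n * c ≤ birkhoffSum f φ n x := hev.frequently.mono fun n hn => by
    obtain ⟨x, hx⟩ := exists_lt_of_lt_ciSup hn
    rcases lt_abs.1 hx with hx | hx
    · exact Or.inr ⟨x, hx.le⟩
    · exact Or.inl ⟨x, by linarith⟩
  rcases frequently_or_distrib.1 hfreq with hneg | hpos
  · obtain ⟨x, q, p, hq, hx, hS⟩ :=
      exists_iterate_eq_add_birkhoffSum_neg_of_frequently hf hφ hlift hc hneg
    exact ⟨x, q, p, hq, hx, hS.ne⟩
  obtain ⟨g, hgf, hfg, hg, hglift⟩ := exists_leftInverse_hasDerivAt hf hlift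
  have hgc : Continuous g := continuous_iff_continuousAt.2 fun y => (hg y).continuousAt
  obtain ⟨y, q, p, hq, hy, hS⟩ := exists_iterate_eq_add_birkhoffSum_neg_of_frequently hg
    (hφ.comp hgc).neg hglift hc <| hpos.mono fun n ⟨x, hx⟩ =>
      ⟨f^[n] x, by rw [birkhoffSum_comp_iterate_of_leftInverse hgf]; linarith⟩
  have hfy : f^[q] (y + p) = y := by rw [← hy]; exact hfg.iterate q y
  refine ⟨y + p, q, -p, hq, by rw [hfy]; push_cast; ring, fun h0 => hS.ne ?_⟩
  have := birkhoffSum_comp_iterate_of_leftInverse hgf φ q (y + p)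
  rwa [hfy, h0, neg_zero] at this

end CircleLift

open CircleLift

/-- Theorem 1 (circle case): a C¹ circle diffeomorphism is C¹-undistorted iff it has a
hyperbolic periodic point. -/
theorem c1_circle_undistorted_iff_hyperbolic_periodic_point
    (f : ℝ → ℝ) (hf : ContDiff ℝ 1 f)
    (hlift : ∀ x : ℝ, f (x + 1) = f x + 1)
    (hpos : ∀ x : ℝ, 0 < deriv f x) :
    (0 < Filter.liminf
        (fun n : ℕ => (1 / (n : ℝ)) * ⨆ x : Set.Icc (0:ℝ) 1, |Real.log (deriv (f^[n]) x)|)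
        Filter.atTop) ↔
      ∃ (x : ℝ) (q : ℕ) (p : ℤ), 1 ≤ q ∧ f^[q] x = x + p ∧ deriv (f^[q]) x ≠ 1 := by
  set φ := fun x => Real.log (deriv f x)
  have hfφ : ∀ x, HasDerivAt f (Real.exp (φ x)) x := fun x => by
    simpa only [φ, Real.exp_log (hpos x)] using (hf.differentiable one_ne_zero x).hasDerivAt
  have hφ : Continuous φ := (hf.continuous_deriv le_rfl).log fun x => (hpos x).ne'
  have hderiv : ∀ n x, deriv (f^[n]) x = Real.exp (birkhoffSum f φ n x) := fun n x =>
    (hasDerivAt_iterate hfφ n x).deriv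
  simp only [hderiv, Real.log_exp, ne_eq, Real.exp_eq_one_iff]
  exact ⟨exists_iterate_eq_add_birkhoffSum_ne_zero_of_liminf_pos hfφ hφ hlift,
    fun ⟨x, q, p, hq, hx, hS⟩ => liminf_pos_of_iterate_eq_add hφ
      (periodic_of_hasDerivAt hfφ hlift) hlift hq hx hS⟩
end

section
/- Let f : ℝ → ℝ be a C^1 interval diffeomorphism lift. Then liminf_{n→∞} (1/n) · sup_{x ∈ [0,1]} |log(deriv (f^[n]) x) − log(deriv (f^[n]) 0)| > 0 if and only if f has a hyperbolic fixed point in [0,1], i.e. there exists x ∈ [0,1] with f x = x and deriv f x ≠ 1. -/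
/-!
Since `log (f^n)' x = ∑_{k<n} log f' (f^k x)`, a hyperbolic fixed point `p` gives
`log (f^n)' p = n log f' p`, whereas `(f^n)'` equals `1` somewhere by the mean value theorem; so
`d(f^n, id)` grows linearly. Conversely, if every fixed point is parabolic then, by compactness,
`|log f'| ≥ ε` only at points moved by at least some `δ > 0`. Orbits are monotone in `[0, 1]`, so
they make at most `1 / δ` such steps, and the Birkhoff sums are at most `n ε + O(1)`.
-/

open Filter Set Topology

theorem MonotoneOn.monotone_iterate_of_le_map {α : Type*} [Preorder α] {f : α → α} {s : Set α}
    {x : α} (hf : MonotoneOn f s) (hs : MapsTo f s s) (hx : x ∈ s) (hle : x ≤ f x) :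
    Monotone fun n => f^[n] x := by
  have hmono : Monotone (hs.restrict f s s) := fun a b hab => hf a.2 b.2 hab
  simpa [Function.comp_def, MapsTo.coe_iterate_restrict] using
    Subtype.mono_coe _ |>.comp (hmono.monotone_iterate_of_le_map (x := ⟨x, hx⟩) hle)

theorem MonotoneOn.antitone_iterate_of_map_le {α : Type*} [Preorder α] {f : α → α} {s : Set α}
    {x : α} (hf : MonotoneOn f s) (hs : MapsTo f s s) (hx : x ∈ s) (hle : f x ≤ x) :
    Antitone fun n => f^[n] x := by
  have hmono : Monotone (hs.restrict f s s) := fun a b hab => hf a.2 b.2 hab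
  simpa [Function.comp_def, MapsTo.coe_iterate_restrict] using
    Subtype.mono_coe _ |>.comp_antitone (hmono.antitone_iterate_of_map_le (x := ⟨x, hx⟩) hle)

theorem Monotone.mul_card_filter_le_sub {u : ℕ → ℝ} (hu : Monotone u) (δ : ℝ) (n : ℕ) :
    δ * ((Finset.range n).filter fun k => δ ≤ |u (k + 1) - u k|).card ≤ u n - u 0 := by
  have hstep : ∀ k, 0 ≤ u (k + 1) - u k := fun k => sub_nonneg.2 (hu k.le_succ)
  calc δ * ((Finset.range n).filter fun k => δ ≤ |u (k + 1) - u k|).card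
      = ∑ _k ∈ (Finset.range n).filter fun k => δ ≤ |u (k + 1) - u k|, δ := by
        rw [Finset.sum_const, nsmul_eq_mul, mul_comm]
    _ ≤ ∑ k ∈ (Finset.range n).filter fun k => δ ≤ |u (k + 1) - u k|, (u (k + 1) - u k) :=
        Finset.sum_le_sum fun k hk => abs_of_nonneg (hstep k) ▸ (Finset.mem_filter.1 hk).2
    _ ≤ ∑ k ∈ Finset.range n, (u (k + 1) - u k) :=
        Finset.sum_le_sum_of_subset_of_nonneg (Finset.filter_subset _ _) fun k _ _ => hstep k
    _ = u n - u 0 := Finset.sum_range_sub u n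

theorem Antitone.mul_card_filter_le_sub {u : ℕ → ℝ} (hu : Antitone u) (δ : ℝ) (n : ℕ) :
    δ * ((Finset.range n).filter fun k => δ ≤ |u (k + 1) - u k|).card ≤ u 0 - u n := by
  simpa only [Pi.neg_apply, neg_sub_neg, abs_sub_comm] using hu.neg.mul_card_filter_le_sub δ n

theorem abs_sum_range_le_add_card_mul (a : ℕ → ℝ) {ε C : ℝ} (hε : 0 ≤ ε) (hC : ∀ k, |a k| ≤ C)
    (n : ℕ) :
    |∑ k ∈ Finset.range n, a k| ≤
      n * ε + ((Finset.range n).filter fun k => ε ≤ |a k|).card * C := by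
  set large := (Finset.range n).filter fun k => ε ≤ |a k|
  set small := (Finset.range n).filter fun k => ¬ ε ≤ |a k|
  have hsmall : ∑ k ∈ small, |a k| ≤ n * ε :=
    calc ∑ k ∈ small, |a k| ≤ small.card * ε :=
          by simpa using Finset.sum_le_card_nsmul small _ ε fun k hk =>
            (not_le.1 (Finset.mem_filter.1 hk).2).le
      _ ≤ n * ε := by
          gcongr
          simpa using Finset.card_filter_le (Finset.range n) _
  have hlarge : ∑ k ∈ large, |a k| ≤ large.card * C := by
    simpa using Finset.sum_le_card_nsmul large _ C fun k _ => hC k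
  calc |∑ k ∈ Finset.range n, a k| ≤ ∑ k ∈ Finset.range n, |a k| :=
        Finset.abs_sum_le_sum_abs _ _
    _ = ∑ k ∈ large, |a k| + ∑ k ∈ small, |a k| :=
        (Finset.sum_filter_add_sum_filter_not _ _ _).symm
    _ ≤ n * ε + large.card * C := by linarith

theorem IsCompact.exists_pos_le_abs_of_le_abs {X : Type*} [TopologicalSpace X] {K : Set X}
    (hK : IsCompact K) {g h : X → ℝ} (hg : ContinuousOn g K) (hh : ContinuousOn h K)
    (hzero : ∀ y ∈ K, h y = 0 → g y = 0) {ε : ℝ} (hε : 0 < ε) :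
    ∃ δ > 0, ∀ y ∈ K, ε ≤ |g y| → δ ≤ |h y| := by
  have hpos : ∀ y ∈ K, 0 < max |h y| (ε - |g y|) := fun y hy => by
    by_cases hy0 : h y = 0
    · simpa [hy0, hzero y hy hy0] using hε
    · exact lt_max_of_lt_left (abs_pos.2 hy0)
  obtain ⟨δ, hδ, hle⟩ := hK.exists_forall_le' (f := fun y => max |h y| (ε - |g y|))
    (hh.abs.sup (continuousOn_const.sub hg.abs)) hpos
  exact ⟨δ, hδ, fun y hy hgy => (le_max_iff.1 (hle y hy)).resolve_right (by linarith)⟩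

theorem tendsto_one_div_mul_nhds_zero_of_le_mul_add {u : ℕ → ℝ}
    (h : ∀ ε > 0, ∃ B, ∀ n, |u n| ≤ n * ε + B) :
    Tendsto (fun n : ℕ => 1 / (n : ℝ) * u n) atTop (𝓝 0) := by
  have : u =o[atTop] fun n : ℕ => (n : ℝ) := by
    refine Asymptotics.isLittleO_iff.2 fun c hc => ?_
    obtain ⟨B, hB⟩ := h (c / 2) (half_pos hc)
    filter_upwards [eventually_ge_atTop ⌈2 * B / c⌉₊] with n hn
    have hBn : 2 * B ≤ n * c := (div_le_iff₀ hc).1 (Nat.ceil_le.1 hn)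
    rw [Real.norm_eq_abs, Real.norm_natCast]
    linarith [hB n]
  simpa only [one_div, inv_mul_eq_div] using this.tendsto_div_nhds_zero

theorem deriv_iterate_eq_prod {𝕜 : Type*} [NontriviallyNormedField 𝕜] {f : 𝕜 → 𝕜}
    (hf : Differentiable 𝕜 f) (n : ℕ) (x : 𝕜) :
    deriv f^[n] x = ∏ k ∈ Finset.range n, deriv f (f^[k] x) := by
  induction n with
  | zero => simp
  | succ n ih =>
    rw [Function.iterate_succ', Finset.prod_range_succ, deriv_comp x hf.differentiableAt
      (hf.iterate n).differentiableAt, ih, mul_comm]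

/-- The distance `d(g, id)` in the maximal right-invariant metric on `Diff¹₊([0, 1])`. -/
noncomputable def c1DistToId (g : ℝ → ℝ) : ℝ :=
  ⨆ x : Icc (0 : ℝ) 1, |Real.log (deriv g x) - Real.log (deriv g 0)|

theorem c1DistToId_nonneg (g : ℝ → ℝ) : 0 ≤ c1DistToId g :=
  Real.iSup_nonneg fun _ => abs_nonneg _

section

variable {g : ℝ → ℝ} {B : ℝ} (hB : ∀ x ∈ Icc (0 : ℝ) 1, |Real.log (deriv g x)| ≤ B)
include hB

theorem abs_log_deriv_sub_log_deriv_zero_le {x : ℝ} (hx : x ∈ Icc (0 : ℝ) 1) :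
    |Real.log (deriv g x) - Real.log (deriv g 0)| ≤ 2 * B := by
  have := hB 0 (left_mem_Icc.2 zero_le_one)
  have := abs_sub (Real.log (deriv g x)) (Real.log (deriv g 0))
  linarith [hB x hx]

theorem c1DistToId_le : c1DistToId g ≤ 2 * B :=
  have : Nonempty (Icc (0 : ℝ) 1) := ⟨⟨0, left_mem_Icc.2 zero_le_one⟩⟩
  ciSup_le fun x => abs_log_deriv_sub_log_deriv_zero_le hB x.2

theorem abs_log_deriv_sub_le_c1DistToId {x : ℝ} (hx : x ∈ Icc (0 : ℝ) 1) :
    |Real.log (deriv g x) - Real.log (deriv g 0)| ≤ c1DistToId g :=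
  le_ciSup (f := fun y : Icc (0 : ℝ) 1 => |Real.log (deriv g y) - Real.log (deriv g 0)|)
    ⟨2 * B, forall_mem_range.2 fun y => abs_log_deriv_sub_log_deriv_zero_le hB y.2⟩ ⟨x, hx⟩

end

structure IsC1IntervalDiffeo (f : ℝ → ℝ) : Prop where
  contDiff : ContDiff ℝ 1 f
  map_zero : f 0 = 0
  map_one : f 1 = 1
  deriv_pos : ∀ x ∈ Icc (0 : ℝ) 1, 0 < deriv f x

namespace IsC1IntervalDiffeo

variable {f : ℝ → ℝ} (hf : IsC1IntervalDiffeo f)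
include hf

theorem differentiable : Differentiable ℝ f :=
  hf.contDiff.differentiable one_ne_zero

theorem strictMonoOn : StrictMonoOn f (Icc 0 1) :=
  strictMonoOn_of_deriv_pos (convex_Icc 0 1) hf.contDiff.continuous.continuousOn
    fun x hx => hf.deriv_pos x (interior_subset hx)

theorem mapsTo : MapsTo f (Icc 0 1) (Icc 0 1) := fun _ hx =>
  ⟨hf.map_zero ▸ hf.strictMonoOn.monotoneOn (left_mem_Icc.2 zero_le_one) hx hx.1,
    hf.map_one ▸ hf.strictMonoOn.monotoneOn hx (right_mem_Icc.2 zero_le_one) hx.2⟩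

theorem exists_abs_log_deriv_le : ∃ C, ∀ x ∈ Icc (0 : ℝ) 1, |Real.log (deriv f x)| ≤ C := by
  obtain ⟨C, hC⟩ := isCompact_Icc.exists_bound_of_continuousOn
    ((hf.contDiff.continuous_deriv le_rfl).continuousOn.log fun x hx => (hf.deriv_pos x hx).ne')
  exact ⟨C, hC⟩

theorem log_deriv_iterate (n : ℕ) {x : ℝ} (hx : x ∈ Icc (0 : ℝ) 1) :
    Real.log (deriv f^[n] x) = ∑ k ∈ Finset.range n, Real.log (deriv f (f^[k] x)) := by
  rw [deriv_iterate_eq_prod hf.differentiable]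
  exact Real.log_prod fun k _ => (hf.deriv_pos _ (hf.mapsTo.iterate k hx)).ne'

theorem log_deriv_iterate_of_isFixedPt {x : ℝ} (hx : f x = x) (n : ℕ) :
    Real.log (deriv f^[n] x) = n * Real.log (deriv f x) := by
  simp only [deriv_iterate_eq_prod hf.differentiable, Function.iterate_fixed hx,
    Finset.prod_const, Finset.card_range, Real.log_pow]

theorem exists_deriv_iterate_eq_one (n : ℕ) : ∃ ξ ∈ Icc (0 : ℝ) 1, deriv f^[n] ξ = 1 := by
  obtain ⟨ξ, hξ, hd⟩ := exists_deriv_eq_slope f^[n] one_pos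
    (hf.differentiable.iterate n).continuous.continuousOn
    (hf.differentiable.iterate n).differentiableOn
  refine ⟨ξ, Ioo_subset_Icc_self hξ, ?_⟩
  rw [hd, Function.iterate_fixed hf.map_zero, Function.iterate_fixed hf.map_one]
  norm_num

theorem mul_card_filter_le_one {x : ℝ} (hx : x ∈ Icc (0 : ℝ) 1) (δ : ℝ) (n : ℕ) :
    δ * ((Finset.range n).filter fun k => δ ≤ |f (f^[k] x) - f^[k] x|).card ≤ 1 := by
  have hxn := hf.mapsTo.iterate n hx
  simp only [← Function.iterate_succ_apply' f]
  rcases le_total x (f x) with hle | hle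
  · have := (hf.strictMonoOn.monotoneOn.monotone_iterate_of_le_map hf.mapsTo hx hle
      ).mul_card_filter_le_sub δ n
    simp only [Function.iterate_zero_apply] at this
    linarith [hx.1, hxn.2]
  · have := (hf.strictMonoOn.monotoneOn.antitone_iterate_of_map_le hf.mapsTo hx hle
      ).mul_card_filter_le_sub δ n
    simp only [Function.iterate_zero_apply] at this
    linarith [hx.2, hxn.1]

theorem abs_log_deriv_iterate_le {C : ℝ} (hC : ∀ x ∈ Icc (0 : ℝ) 1, |Real.log (deriv f x)| ≤ C)
    (n : ℕ) : ∀ x ∈ Icc (0 : ℝ) 1, |Real.log (deriv f^[n] x)| ≤ n * C := fun x hx => by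
  rw [hf.log_deriv_iterate n hx]
  refine (Finset.abs_sum_le_sum_abs _ _).trans ?_
  simpa using
    Finset.sum_le_card_nsmul (Finset.range n) _ C fun k _ => hC _ (hf.mapsTo.iterate k hx)

theorem exists_abs_log_deriv_iterate_le_mul_add
    (hpar : ∀ x ∈ Icc (0 : ℝ) 1, f x = x → deriv f x = 1) {ε : ℝ} (hε : 0 < ε) :
    ∃ B, ∀ n : ℕ, ∀ x ∈ Icc (0 : ℝ) 1, |Real.log (deriv f^[n] x)| ≤ n * ε + B := by
  obtain ⟨C, hC⟩ := hf.exists_abs_log_deriv_le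
  obtain ⟨δ, hδ, hmoves⟩ := isCompact_Icc.exists_pos_le_abs_of_le_abs (h := fun y => f y - y)
    ((hf.contDiff.continuous_deriv le_rfl).continuousOn.log fun x hx => (hf.deriv_pos x hx).ne')
    (hf.contDiff.continuous.sub continuous_id).continuousOn
    (fun y hy hfix => by rw [hpar y hy (sub_eq_zero.1 hfix), Real.log_one]) hε
  refine ⟨C / δ, fun n x hx => ?_⟩
  have horbit := fun k => hf.mapsTo.iterate k hx
  have hcard : (((Finset.range n).filter fun k => ε ≤ |Real.log (deriv f (f^[k] x))|).card : ℝ)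
      ≤ 1 / δ := by
    rw [le_div_iff₀ hδ, mul_comm]
    refine le_trans ?_ (hf.mul_card_filter_le_one hx δ n)
    refine mul_le_mul_of_nonneg_left ?_ hδ.le
    exact_mod_cast Finset.card_le_card <|
      Finset.monotone_filter_right _ fun k _ hk => hmoves _ (horbit k) hk
  have hC0 : 0 ≤ C := (abs_nonneg _).trans (hC x hx)
  rw [hf.log_deriv_iterate n hx]
  calc _ ≤ n * ε +
        ((Finset.range n).filter fun k => ε ≤ |Real.log (deriv f (f^[k] x))|).card * C :=
        abs_sum_range_le_add_card_mul _ hε.le (fun k => hC _ (horbit k)) n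
    _ ≤ n * ε + 1 / δ * C := by gcongr
    _ = n * ε + C / δ := by ring

theorem tendsto_one_div_mul_c1DistToId_iterate
    (hpar : ∀ x ∈ Icc (0 : ℝ) 1, f x = x → deriv f x = 1) :
    Tendsto (fun n : ℕ => 1 / (n : ℝ) * c1DistToId f^[n]) atTop (𝓝 0) := by
  refine tendsto_one_div_mul_nhds_zero_of_le_mul_add fun ε hε => ?_
  obtain ⟨B, hB⟩ := hf.exists_abs_log_deriv_iterate_le_mul_add hpar (half_pos hε)
  refine ⟨2 * B, fun n => ?_⟩
  rw [abs_of_nonneg (c1DistToId_nonneg _)]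
  calc c1DistToId f^[n] ≤ 2 * (n * (ε / 2) + B) := c1DistToId_le (hB n)
    _ = n * ε + 2 * B := by ring

theorem mul_abs_log_deriv_le_c1DistToId_iterate {x : ℝ} (hx : x ∈ Icc (0 : ℝ) 1) (hfix : f x = x)
    (n : ℕ) : n * |Real.log (deriv f x)| ≤ 2 * c1DistToId f^[n] := by
  obtain ⟨C, hC⟩ := hf.exists_abs_log_deriv_le
  obtain ⟨ξ, hξ, hdξ⟩ := hf.exists_deriv_iterate_eq_one n
  have hB := hf.abs_log_deriv_iterate_le hC n
  have hxdist := abs_log_deriv_sub_le_c1DistToId hB hx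
  have hξdist := abs_log_deriv_sub_le_c1DistToId hB hξ
  rw [hdξ, Real.log_one, zero_sub, abs_neg] at hξdist
  rw [hf.log_deriv_iterate_of_isFixedPt hfix] at hxdist
  have := abs_sub_abs_le_abs_sub (n * Real.log (deriv f x)) (Real.log (deriv f^[n] 0))
  rw [abs_mul, Nat.abs_cast] at this
  linarith

theorem liminf_one_div_mul_c1DistToId_iterate_pos {x : ℝ} (hx : x ∈ Icc (0 : ℝ) 1)
    (hfix : f x = x) (hne : deriv f x ≠ 1) :
    0 < liminf (fun n : ℕ => 1 / (n : ℝ) * c1DistToId f^[n]) atTop := by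
  obtain ⟨C, hC⟩ := hf.exists_abs_log_deriv_le
  have hL : 0 < |Real.log (deriv f x)| :=
    abs_pos.2 fun h => hne (Real.eq_one_of_pos_of_log_eq_zero (hf.deriv_pos x hx) h)
  have hbdd : IsBoundedUnder (· ≤ ·) atTop (fun n : ℕ => 1 / (n : ℝ) * c1DistToId f^[n]) := by
    refine isBoundedUnder_of_eventually_le (a := 2 * C) ?_
    filter_upwards [eventually_gt_atTop 0] with n hn
    rw [one_div, ← div_eq_inv_mul, div_le_iff₀ (by positivity)]
    linarith [c1DistToId_le (hf.abs_log_deriv_iterate_le hC n)]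
  refine (half_pos hL).trans_le (le_liminf_of_le hbdd.isCoboundedUnder_ge ?_)
  filter_upwards [eventually_gt_atTop 0] with n hn
  rw [one_div, ← div_eq_inv_mul, le_div_iff₀ (by positivity)]
  linarith [hf.mul_abs_log_deriv_le_c1DistToId_iterate hx hfix n]

end IsC1IntervalDiffeo

/-- Theorem 1 (interval case): a C¹ diffeomorphism of the interval is C¹-undistorted iff
it has a hyperbolic fixed point. -/
theorem c1_interval_undistorted_iff_hyperbolic_fixed_point
    (f : ℝ → ℝ) (hf : ContDiff ℝ 1 f)
    (h0 : f 0 = 0) (h1 : f 1 = 1)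
    (hpos : ∀ x ∈ Set.Icc (0:ℝ) 1, 0 < deriv f x) :
    (0 < Filter.liminf
        (fun n : ℕ => (1 / (n : ℝ)) *
          ⨆ x : Set.Icc (0:ℝ) 1,
            |Real.log (deriv (f^[n]) x) - Real.log (deriv (f^[n]) 0)|)
        Filter.atTop) ↔
      ∃ x ∈ Set.Icc (0:ℝ) 1, f x = x ∧ deriv f x ≠ 1 := by
  have hdiffeo : IsC1IntervalDiffeo f := ⟨hf, h0, h1, hpos⟩
  refine ⟨fun hlim => ?_, fun ⟨x, hx, hfix, hne⟩ =>
    hdiffeo.liminf_one_div_mul_c1DistToId_iterate_pos hx hfix hne⟩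
  by_contra! hpar
  exact hlim.ne' (hdiffeo.tendsto_one_div_mul_c1DistToId_iterate hpar).liminf_eq
end

section
/- Let f : ℝ → ℝ be continuously differentiable with deriv f x > 0 for all x, and let a < b be real numbers with f a = a, f b = b, deriv f a = 1, deriv f b = 1, and f x ≠ x for all x ∈ (a,b). Then (1/n) · sup_{x ∈ [a,b]} |log(deriv (f^[n]) x)| tends to 0 as n → ∞. -/
/-!
Write `g = log ∘ f'`, so that `log (f^[n])' x` is the Birkhoff sum `∑_{k<n} g (f^[k] x)`.
Since `g a = g b = 0`, all terms with `|g| < ε` contribute at most `ε n`. The remaining terms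
come from visits of the orbit to the compact set `K = {y ∈ [a,b] | ε ≤ |g y|} ⊆ (a,b)`, where the
displacement `|f y - y|` is bounded below by some `m > 0`. Orbits of an increasing map are
monotone, so their displacements add up to at most `b - a`, and the orbit visits `K` at most
`(b - a) / m` times. Hence `|log (f^[n])' x| ≤ ε n + C` uniformly on `[a,b]`.
-/

open Filter Topology Finset

theorem hasDerivAt_iterate_prod {𝕜 : Type*} [NontriviallyNormedField 𝕜] {f : 𝕜 → 𝕜}
    (hf : Differentiable 𝕜 f) (x : 𝕜) (n : ℕ) :
    HasDerivAt f^[n] (∏ k ∈ range n, deriv f (f^[k] x)) x := by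
  induction n with
  | zero => simpa using hasDerivAt_id x
  | succ n ih =>
    rw [Function.iterate_succ', prod_range_succ, mul_comm]
    exact (hf (f^[n] x)).hasDerivAt.comp x ih

theorem log_deriv_iterate_eq_sum {f : ℝ → ℝ} (hf : Differentiable ℝ f)
    (hf' : ∀ x, deriv f x ≠ 0) (x : ℝ) (n : ℕ) :
    Real.log (deriv f^[n] x) = ∑ k ∈ range n, Real.log (deriv f (f^[k] x)) := by
  rw [(hasDerivAt_iterate_prod hf x n).deriv, Real.log_prod fun k _ => hf' _]

theorem Monotone.monotone_or_antitone_iterate_apply {α : Type*} [LinearOrder α] {f : α → α}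
    (hf : Monotone f) (x : α) :
    Monotone (fun n => f^[n] x) ∨ Antitone (fun n => f^[n] x) :=
  (le_total x (f x)).imp hf.monotone_iterate_of_le_map hf.antitone_iterate_of_map_le

theorem sum_range_abs_sub_eq_of_monotone_or_antitone {α : Type*} [AddCommGroup α] [LinearOrder α]
    [IsOrderedAddMonoid α] {u : ℕ → α} (hu : Monotone u ∨ Antitone u) (n : ℕ) :
    ∑ k ∈ range n, |u (k + 1) - u k| = |u n - u 0| := by
  rcases hu with hu | hu
  · rw [abs_of_nonneg (sub_nonneg.2 (hu (Nat.zero_le n))), ← sum_range_sub]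
    exact sum_congr rfl fun k _ => abs_of_nonneg (sub_nonneg.2 (hu k.le_succ))
  · rw [abs_of_nonpos (sub_nonpos.2 (hu (Nat.zero_le n))), neg_sub, ← sum_range_sub']
    exact sum_congr rfl fun k _ => abs_of_nonpos (sub_nonpos.2 (hu k.le_succ)) |>.trans (neg_sub _ _)

theorem card_filter_mul_le_abs_sub {u : ℕ → ℝ} (hu : Monotone u ∨ Antitone u) {P : ℕ → Prop}
    [DecidablePred P] {m : ℝ} (hm : ∀ k, P k → m ≤ |u (k + 1) - u k|) (n : ℕ) :
    #{k ∈ range n | P k} * m ≤ |u n - u 0| := by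
  rw [← sum_range_abs_sub_eq_of_monotone_or_antitone hu n, ← nsmul_eq_mul]
  calc #{k ∈ range n | P k} • m ≤ ∑ k ∈ range n with P k, |u (k + 1) - u k| :=
        card_nsmul_le_sum _ _ _ fun k hk => hm k (mem_filter.1 hk).2
    _ ≤ ∑ k ∈ range n, |u (k + 1) - u k| :=
        sum_le_sum_of_subset_of_nonneg (filter_subset _ _) fun _ _ _ => abs_nonneg _

theorem card_filter_iterate_mem_mul_le {f : ℝ → ℝ} (hf : Monotone f) {a b : ℝ}
    (hmaps : Set.MapsTo f (Set.Icc a b) (Set.Icc a b)) {K : Set ℝ} [DecidablePred (· ∈ K)]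
    {m : ℝ} (hm : ∀ y ∈ K, m ≤ |f y - y|) {x : ℝ} (hx : x ∈ Set.Icc a b) (n : ℕ) :
    #{k ∈ range n | f^[k] x ∈ K} * m ≤ b - a := by
  have hstep : ∀ k, f^[k] x ∈ K → m ≤ |f^[k + 1] x - f^[k] x| := fun k hk => by
    rw [Function.iterate_succ_apply']
    exact hm _ hk
  calc _ ≤ |f^[n] x - f^[0] x| :=
        card_filter_mul_le_abs_sub (hf.monotone_or_antitone_iterate_apply x) hstep n
    _ = dist (f^[n] x) x := (Real.dist_eq _ _).symm
    _ ≤ b - a := Real.dist_le_of_mem_Icc (hmaps.iterate n hx) hx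

theorem abs_sum_le_mul_add_card_filter_mul {h : ℕ → ℝ} {P : ℕ → Prop} [DecidablePred P]
    {ε M : ℝ} (hε : 0 ≤ ε) (hM : ∀ k, |h k| ≤ M) (hε' : ∀ k, ¬P k → |h k| ≤ ε) (n : ℕ) :
    |∑ k ∈ range n, h k| ≤ ε * n + #{k ∈ range n | P k} * M := by
  have hterm : ∀ k, |h k| ≤ ε + if P k then M else 0 := fun k => by
    split_ifs with hk
    · linarith [hM k]
    · simpa using hε' k hk
  calc |∑ k ∈ range n, h k| ≤ ∑ k ∈ range n, |h k| := abs_sum_le_sum_abs _ _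
    _ ≤ ∑ k ∈ range n, (ε + if P k then M else 0) := sum_le_sum fun k _ => hterm k
    _ = ε * n + #{k ∈ range n | P k} * M := by
        rw [sum_add_distrib, sum_ite, sum_const_zero, sum_const, sum_const]
        simp [mul_comm]

theorem tendsto_one_div_mul_of_forall_le_mul_add {u : ℕ → ℝ} (hu : ∀ n, 0 ≤ u n)
    (h : ∀ ε > 0, ∃ C, ∀ n : ℕ, u n ≤ ε * n + C) :
    Tendsto (fun n : ℕ => (1 / (n : ℝ)) * u n) atTop (𝓝 0) := by
  refine tendsto_order.2 ⟨fun δ hδ => Eventually.of_forall fun n => ?_, fun δ hδ => ?_⟩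
  · exact hδ.trans_le (by positivity [hu n])
  obtain ⟨C, hC⟩ := h (δ / 2) (half_pos hδ)
  filter_upwards [(tendsto_const_div_atTop_nhds_zero_nat C).eventually (gt_mem_nhds (half_pos hδ)),
    eventually_gt_atTop 0] with n hCn hn
  have hn' : (0 : ℝ) < n := Nat.cast_pos.2 hn
  calc 1 / (n : ℝ) * u n ≤ 1 / n * (δ / 2 * n + C) := by gcongr; exact hC n
    _ = δ / 2 + C / n := by field_simp
    _ < δ := by linarith

theorem exists_pos_le_abs_sub_self_of_le_abs {f g : ℝ → ℝ} (hf : Continuous f)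
    (hg : Continuous g) {a b : ℝ} (hga : g a = 0) (hgb : g b = 0)
    (hnofix : ∀ x ∈ Set.Ioo a b, f x ≠ x) {ε : ℝ} (hε : 0 < ε) :
    ∃ m > 0, ∀ y ∈ Set.Icc a b ∩ {y | ε ≤ |g y|}, m ≤ |f y - y| := by
  have hK : IsCompact (Set.Icc a b ∩ {y | ε ≤ |g y|}) :=
    isCompact_Icc.inter_right (isClosed_le continuous_const hg.abs)
  refine hK.exists_forall_le' (hf.sub continuous_id).abs.continuousOn ?_
  rintro y ⟨⟨hay, hyb⟩, hy⟩
  have hne : ∀ z, g z = 0 → z ≠ y := by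
    rintro z hz rfl
    rw [Set.mem_ofPred_eq, hz, abs_zero] at hy
    linarith
  exact abs_pos.2 (sub_ne_zero.2 (hnofix y
    ⟨lt_of_le_of_ne hay (hne a hga), lt_of_le_of_ne hyb (hne b hgb).symm⟩))

open Classical in
theorem exists_abs_log_deriv_iterate_le {f : ℝ → ℝ} (hf : ContDiff ℝ 1 f)
    (hpos : ∀ x, 0 < deriv f x) {a b : ℝ} (hfa : f a = a) (hfb : f b = b)
    (hfa' : deriv f a = 1) (hfb' : deriv f b = 1) (hnofix : ∀ x ∈ Set.Ioo a b, f x ≠ x)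
    {ε : ℝ} (hε : 0 < ε) :
    ∃ C, ∀ n : ℕ, ∀ x ∈ Set.Icc a b, |Real.log (deriv f^[n] x)| ≤ ε * n + C := by
  set g : ℝ → ℝ := fun y => Real.log (deriv f y)
  have hg : Continuous g := (hf.continuous_deriv le_rfl).log fun x => (hpos x).ne'
  obtain ⟨M, hM⟩ := isCompact_Icc.exists_bound_of_continuousOn (s := Set.Icc a b) hg.continuousOn
  obtain ⟨m, hm0, hm⟩ := exists_pos_le_abs_sub_self_of_le_abs hf.continuous hg
    (by simp [g, hfa']) (by simp [g, hfb']) hnofix hε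
  have hmono : Monotone f := (strictMono_of_deriv_pos hpos).monotone
  have hmaps : Set.MapsTo f (Set.Icc a b) (Set.Icc a b) := by
    simpa only [hfa, hfb] using hmono.mapsTo_Icc (a := a) (b := b)
  refine ⟨M * ((b - a) / m), fun n x hx => ?_⟩
  have hM0 : 0 ≤ M := (norm_nonneg _).trans (hM x hx)
  have hvisits : (#{k ∈ range n | f^[k] x ∈ Set.Icc a b ∩ {y | ε ≤ |g y|}} : ℝ) ≤ (b - a) / m :=
    (le_div_iff₀ hm0).2 (card_filter_iterate_mem_mul_le hmono hmaps hm hx n)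
  rw [log_deriv_iterate_eq_sum (hf.differentiable one_ne_zero) (fun x => (hpos x).ne')]
  calc _ ≤ ε * n + #{k ∈ range n | f^[k] x ∈ Set.Icc a b ∩ {y | ε ≤ |g y|}} * M :=
        abs_sum_le_mul_add_card_filter_mul hε.le (fun k => hM _ (hmaps.iterate k hx))
          (fun k hk => (not_le.1 fun h => hk ⟨hmaps.iterate k hx, h⟩).le) n
    _ ≤ ε * n + M * ((b - a) / m) := by rw [mul_comm _ M]; gcongr

theorem sublinear_growth_on_parabolic_interval_general
    (f : ℝ → ℝ) (hf : ContDiff ℝ 1 f)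
    (hpos : ∀ x : ℝ, 0 < deriv f x)
    (a b : ℝ)
    (hfa : f a = a) (hfb : f b = b)
    (hfa' : deriv f a = 1) (hfb' : deriv f b = 1)
    (hnofix : ∀ x ∈ Set.Ioo a b, f x ≠ x) :
    Filter.Tendsto
      (fun n : ℕ => (1 / (n : ℝ)) * ⨆ x : Set.Icc a b, |Real.log (deriv (f^[n]) x)|)
      Filter.atTop (𝓝 0) := by
  refine tendsto_one_div_mul_of_forall_le_mul_add
    (fun n => Real.iSup_nonneg fun _ => abs_nonneg _) fun ε hε => ?_
  obtain ⟨C, hC⟩ := exists_abs_log_deriv_iterate_le hf hpos hfa hfb hfa' hfb' hnofix hε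
  exact ⟨max C 0, fun n =>
    Real.iSup_le (fun x => (hC n x x.2).trans (by gcongr; exact le_max_left C 0)) (by positivity)⟩

/-- Key claim of Case II of the proof of Theorem 1: on an interval whose endpoints are
parabolic fixed points and with no interior fixed point, log-derivatives of iterates
grow sublinearly. -/
theorem sublinear_growth_on_parabolic_interval
    (f : ℝ → ℝ) (hf : ContDiff ℝ 1 f)
    (hpos : ∀ x : ℝ, 0 < deriv f x)
    (a b : ℝ) (hab : a < b)
    (hfa : f a = a) (hfb : f b = b)
    (hfa' : deriv f a = 1) (hfb' : deriv f b = 1)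
    (hnofix : ∀ x ∈ Set.Ioo a b, f x ≠ x) :
    Filter.Tendsto
      (fun n : ℕ => (1 / (n : ℝ)) * ⨆ x : Set.Icc a b, |Real.log (deriv (f^[n]) x)|)
      Filter.atTop (𝓝 0) :=
  sublinear_growth_on_parabolic_interval_general f hf hpos a b hfa hfb hfa' hfb' hnofix
end

section
/- There exist functions f, g : ℝ → ℝ, both real-analytic on ℝ, both satisfying h(x+1) = h(x) + 1 and deriv h x > 0 for all x ∈ ℝ (for h = f and h = g), such that: (i) g ∘ f = f ∘ f ∘ g (so that g f g⁻¹ = f² in the group of circle diffeomorphisms); (ii) there is a point x₀ ∈ [0,1) with f x₀ = x₀, deriv f x₀ = 1, deriv (deriv f) x₀ ≠ 0; and (iii) x₀ is the unique fixed point of f in [x₀, x₀ + 1) (i.e. for x ∈ [x₀, x₀+1), f x = x implies x = x₀). -/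
/-!
Identify `ℝ²` with `ℂ`. The lines through the origin form a circle, parametrised by
`x ∈ ℝ/ℤ ↦ ℝ · exp (iπx)`, so an invertible real-linear map `M` of `ℂ` acts on it by an analytic
circle diffeomorphism. If `M` turns every vector by less than a right angle, i.e.
`0 < Re (M z / z)`, this action has the analytic lift `x ↦ x + arg (M w / w) / π`,
`w = exp (iπx)`, with derivative `det M / ‖M w‖²`.

The shear `S (x, y) = (x + y, y)` and the dilation `D (x, y) = (2x, y)` satisfy `D S = S² D`.
Their lifts satisfy the same relation: both sides send `x` to points with the same image on the
circle, and two continuous lifts of one map that agree at `0` agree everywhere, since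
`ℝ → S¹` is a covering map. The only line fixed by `S` is the real axis, where the lift of `S`
has derivative `1` and second derivative `-2π`.
-/

open Complex ComplexConjugate Real

noncomputable def expPiI (x : ℝ) : ℂ := cexp (π * x * I)

lemma expPiI_eq_exp_ofReal_mul_I (x : ℝ) : expPiI x = cexp ((π * x : ℝ) * I) := by
  rw [expPiI]; push_cast; rfl

lemma norm_expPiI (x : ℝ) : ‖expPiI x‖ = 1 := by
  rw [expPiI_eq_exp_ofReal_mul_I]; exact norm_exp_ofReal_mul_I _

lemma expPiI_ne_zero (x : ℝ) : expPiI x ≠ 0 := exp_ne_zero _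

lemma expPiI_im (x : ℝ) : (expPiI x).im = Real.sin (π * x) := by
  rw [expPiI_eq_exp_ofReal_mul_I]; exact exp_ofReal_mul_I_im _

lemma expPiI_add (x y : ℝ) : expPiI (x + y) = expPiI x * expPiI y := by
  rw [expPiI, expPiI, expPiI, ← Complex.exp_add]; push_cast; ring_nf

lemma expPiI_add_one (x : ℝ) : expPiI (x + 1) = -expPiI x := by
  rw [expPiI_add, show expPiI 1 = -1 by simp [expPiI]]; ring

lemma hasDerivAt_expPiI (x : ℝ) : HasDerivAt expPiI (π * I * expPiI x) x := by
  have h : HasDerivAt (fun y : ℝ => (π : ℂ) * y * I) (π * I) x := by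
    simpa using ((hasDerivAt_id x).ofReal_comp.const_mul (π : ℂ)).mul_const I
  exact (mul_comm (expPiI x) _).symm ▸ h.cexp

lemma analyticAt_expPiI (x : ℝ) : AnalyticAt ℝ expPiI x := by
  have h : AnalyticAt ℝ (fun y : ℝ => (π : ℂ) * y * I) x :=
    (analyticAt_const.mul (ofRealCLM.analyticAt x)).mul analyticAt_const
  exact analyticAt_cexp.restrictScalars.comp h

lemma eq_of_expPiI_eq {a b : ℝ → ℝ} (ha : Continuous a) (hb : Continuous b)
    (h : ∀ x, expPiI (a x) = expPiI (b x)) (x₀ : ℝ) (h₀ : a x₀ = b x₀) : a = b := by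
  have hexp : Circle.exp ∘ (fun x => π * a x) = Circle.exp ∘ (fun x => π * b x) := by
    funext x
    apply Circle.ext
    simpa [Circle.coe_exp, expPiI, mul_assoc] using h x
  have hπ := Circle.isCoveringMap_exp.eq_of_comp_eq (by fun_prop) (by fun_prop) hexp x₀
    (by rw [h₀])
  funext x
  exact mul_left_cancel₀ pi_ne_zero (congrFun hπ x)

lemma im_map_I_mul_mul_conj (L : ℂ →ₗ[ℝ] ℂ) (z : ℂ) :
    (L (I * z) * conj (L z)).im = LinearMap.det L * ‖z‖ ^ 2 := by
  have hz : L z = z.re • L 1 + z.im • L I := by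
    rw [← map_smul, ← map_smul, ← map_add]; congr 1; simp [real_smul, re_add_im]
  have hIz : L (I * z) = (-z.im) • L 1 + z.re • L I := by
    rw [← map_smul, ← map_smul, ← map_add]; congr 1; apply Complex.ext <;> simp [real_smul]
  rw [hIz, hz, ← LinearMap.det_toMatrix basisOneI, Matrix.det_fin_two, ← normSq_eq_norm_sq]
  simp only [LinearMap.toMatrix_apply, coe_basisOneI, coe_basisOneI_repr, real_smul,
    Matrix.cons_val_zero, Matrix.cons_val_one, add_im, add_re, mul_im, mul_re, ofReal_re,
    ofReal_im, conj_re, conj_im, normSq_apply, ofReal_neg, neg_re, neg_im]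
  ring

section ProjLift

variable (M : ℂ →L[ℝ] ℂ)

/-- The lift to `ℝ` of the action of `M` on lines. It is only meaningful where
`0 < Re (M w / w)`, which keeps `M w / w` off the branch cut of `arg`. -/
noncomputable def projLift (x : ℝ) : ℝ := x + arg (M (expPiI x) / expPiI x) / π

lemma map_ne_zero_of_re_div_pos {z : ℂ} (hz : 0 < (M z / z).re) : M z ≠ 0 :=
  fun h => by simp [h] at hz

lemma injective_of_re_div_pos (hM : ∀ z ≠ 0, 0 < (M z / z).re) : Function.Injective M :=
  (injective_iff_map_eq_zero M).2 fun z hz =>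
    by_contra fun h => map_ne_zero_of_re_div_pos M (hM z h) hz

lemma projLift_add_one (x : ℝ) : projLift M (x + 1) = projLift M x + 1 := by
  rw [projLift, projLift, expPiI_add_one, map_neg, neg_div_neg_eq]; ring

lemma projLift_eq_self_iff {x : ℝ} (hx : 0 < (M (expPiI x) / expPiI x).re) :
    projLift M x = x ↔ (M (expPiI x) / expPiI x).im = 0 := by
  rw [projLift, add_eq_left, div_eq_zero_iff, arg_eq_zero_iff, or_iff_left pi_ne_zero]
  exact and_iff_right hx.le

lemma expPiI_projLift {x : ℝ} (hx : M (expPiI x) ≠ 0) :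
    expPiI (projLift M x) = M (expPiI x) / ‖M (expPiI x)‖ := by
  set q := M (expPiI x) / expPiI x
  have hq : ‖q‖ = ‖M (expPiI x)‖ := by simp [q, norm_expPiI]
  have harg : expPiI (arg q / π) = cexp (arg q * I) := by
    rw [expPiI]; congr 1; push_cast; field_simp
  have hexp : cexp (arg q * I) = q / ‖q‖ := by
    rw [eq_div_iff (by simpa [q, norm_expPiI] using hx), mul_comm, norm_mul_exp_arg_mul_I]
  rw [projLift, expPiI_add, harg, hexp, hq, ← mul_div_assoc,
    mul_div_cancel₀ _ (expPiI_ne_zero x)]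

lemma expPiI_projLift_of_expPiI_eq (hM : Function.Injective M) {x : ℝ} {u : ℂ}
    (hx : expPiI x = u / ‖u‖) : expPiI (projLift M x) = M u / ‖M u‖ := by
  have hu : u ≠ 0 := by rintro rfl; simp [expPiI_ne_zero] at hx
  have hu' : (‖u‖ : ℂ) ≠ 0 := ofReal_ne_zero.2 (norm_ne_zero_iff.2 hu)
  have hMu : M u ≠ 0 := (map_ne_zero_iff M hM).2 hu
  have hscale : M (expPiI x) = (‖u‖⁻¹ : ℝ) • M u := by
    rw [hx, ← map_smul, real_smul, div_eq_inv_mul, ofReal_inv]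
  rw [expPiI_projLift M (by rw [hscale]; exact smul_ne_zero (by simpa using hu) hMu), hscale,
    norm_smul, real_smul]
  simp only [norm_inv, norm_norm, ofReal_mul, ofReal_inv]
  field_simp

lemma analyticAt_projLift {x : ℝ} (hx : 0 < (M (expPiI x) / expPiI x).re) :
    AnalyticAt ℝ (projLift M) x := by
  have hq : AnalyticAt ℝ (fun y => M (expPiI y) / expPiI y) x :=
    ((M.analyticAt _).comp (analyticAt_expPiI x)).div (analyticAt_expPiI x) (expPiI_ne_zero x)
  have hlog : AnalyticAt ℝ Complex.log (M (expPiI x) / expPiI x) :=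
    (analyticAt_clog (.inl hx)).restrictScalars
  have harg : AnalyticAt ℝ (fun y => arg (M (expPiI y) / expPiI y)) x := by
    simp_rw [← log_im]
    exact (imCLM.analyticAt _).comp (hlog.comp_of_eq hq rfl)
  exact analyticAt_id.add harg.div_const

lemma continuous_projLift (hM : ∀ z ≠ 0, 0 < (M z / z).re) : Continuous (projLift M) :=
  continuous_iff_continuousAt.2 fun x =>
    (analyticAt_projLift M (hM _ (expPiI_ne_zero x))).continuousAt

lemma hasDerivAt_map_expPiI (x : ℝ) :
    HasDerivAt (fun y => M (expPiI y)) (π * M (I * expPiI x)) x := by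
  have h := M.hasFDerivAt.comp_hasDerivAt x (hasDerivAt_expPiI x)
  rwa [show (π : ℂ) * I * expPiI x = (π : ℝ) • (I * expPiI x) by rw [real_smul]; ring,
    map_smul, real_smul] at h

lemma hasDerivAt_projLift {x : ℝ} (hx : 0 < (M (expPiI x) / expPiI x).re) :
    HasDerivAt (projLift M) (M (I * expPiI x) / M (expPiI x)).im x := by
  set w := expPiI x with hw
  have hw0 : w ≠ 0 := expPiI_ne_zero x
  have hMw := map_ne_zero_of_re_div_pos M hx
  have hlog := ((hasDerivAt_map_expPiI M x).div (hasDerivAt_expPiI x)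
    (expPiI_ne_zero x)).clog_real (.inl hx)
  have harg := (imCLM.hasFDerivAt.comp_hasDerivAt x hlog).div_const π
  simp only [Function.comp_def, imCLM_apply, log_im, Pi.div_apply, ← hw] at harg
  refine ((hasDerivAt_id x).add harg).congr_deriv ?_
  have hlogDeriv : (π * M (I * w) * w - M w * (π * I * w)) / w ^ 2 / (M w / w) =
      π * (M (I * w) / M w) - π * I := by
    field_simp
  simp only [hlogDeriv, sub_im, mul_im, ofReal_re, ofReal_im, I_re, I_im]
  field_simp; ring

lemma deriv_projLift (hM : ∀ z ≠ 0, 0 < (M z / z).re) :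
    deriv (projLift M) = fun x => (M (I * expPiI x) / M (expPiI x)).im :=
  funext fun x => (hasDerivAt_projLift M (hM _ (expPiI_ne_zero x))).deriv

lemma deriv_projLift_pos (hM : ∀ z ≠ 0, 0 < (M z / z).re) (hdet : 0 < M.det) (x : ℝ) :
    0 < deriv (projLift M) x := by
  have hMw := map_ne_zero_of_re_div_pos M (hM _ (expPiI_ne_zero x))
  have hdiv (a b : ℂ) : (a / b).im = (a * conj b).im / normSq b := by
    rw [div_im, mul_im, conj_re, conj_im]; ring
  have hcross : (M (I * expPiI x) * conj (M (expPiI x))).im = M.det := by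
    simpa [norm_expPiI] using im_map_I_mul_mul_conj M (expPiI x)
  rw [deriv_projLift M hM]
  beta_reduce
  rw [hdiv, hcross]
  exact div_pos hdet (normSq_pos.2 hMw)

lemma hasDerivAt_deriv_projLift (hM : ∀ z ≠ 0, 0 < (M z / z).re) (x : ℝ) :
    HasDerivAt (deriv (projLift M))
      (-(π * (1 + (M (I * expPiI x) / M (expPiI x)) ^ 2))).im x := by
  have hMw := map_ne_zero_of_re_div_pos M (hM _ (expPiI_ne_zero x))
  have hMIw := hasDerivAt_map_expPiI (M.comp (ContinuousLinearMap.mul ℝ ℂ I)) x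
  simp only [ContinuousLinearMap.comp_apply, ContinuousLinearMap.mul_apply', ← mul_assoc,
    I_mul_I, neg_one_mul, map_neg] at hMIw
  rw [deriv_projLift M hM]
  refine (imCLM.hasFDerivAt.comp_hasDerivAt x
    (hMIw.div (hasDerivAt_map_expPiI M x) hMw)).congr_deriv ?_
  simp only [imCLM_apply]
  congr 1
  field_simp
  ring

end ProjLift

/-- In the slope `r = y / x` of a line, `shear` and `dilation` act as the paper's
`F r = r / (r + 1)` and `G r = r / 2`. -/
noncomputable def shear : ℂ →L[ℝ] ℂ := 1 + ofRealCLM.comp imCLM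

noncomputable def dilation : ℂ →L[ℝ] ℂ := 1 + ofRealCLM.comp reCLM

lemma shear_apply (z : ℂ) : shear z = z + z.im := rfl

lemma dilation_apply (z : ℂ) : dilation z = z + z.re := rfl

lemma dilation_shear (z : ℂ) : dilation (shear z) = shear (shear (dilation z)) := by
  apply Complex.ext <;>
    simp only [shear_apply, dilation_apply, add_re, add_im, ofReal_re, ofReal_im] <;> ring

lemma re_shear_div_pos (z : ℂ) (hz : z ≠ 0) : 0 < (shear z / z).re := by
  have hn := normSq_pos.2 hz
  have hre : (shear z / z).re = (normSq z + z.im * z.re) / normSq z := by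
    rw [shear_apply, add_div, div_self hz, add_re, one_re, div_re, ofReal_re, ofReal_im]
    field_simp; ring
  rw [hre, normSq_apply] at *
  exact div_pos (by nlinarith [sq_nonneg (z.re + z.im)]) hn

lemma re_dilation_div_pos (z : ℂ) (hz : z ≠ 0) : 0 < (dilation z / z).re := by
  have hn := normSq_pos.2 hz
  rw [dilation_apply, add_div, div_self hz, add_re, one_re, div_re, ofReal_re, ofReal_im,
    zero_mul, zero_div, add_zero]
  linarith [div_nonneg (mul_self_nonneg z.re) hn.le]

lemma im_shear_div (z : ℂ) (hz : z ≠ 0) : (shear z / z).im = -z.im ^ 2 / normSq z := by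
  rw [shear_apply, add_div, div_self hz, add_im, one_im, div_im, ofReal_re, ofReal_im]
  ring

lemma det_shear : shear.det = 1 := by
  rw [ContinuousLinearMap.det, ← LinearMap.det_toMatrix basisOneI, Matrix.det_fin_two]
  simp [LinearMap.toMatrix_apply, shear_apply]

lemma det_dilation : dilation.det = 2 := by
  rw [ContinuousLinearMap.det, ← LinearMap.det_toMatrix basisOneI, Matrix.det_fin_two]
  norm_num [LinearMap.toMatrix_apply, dilation_apply]

lemma projLift_shear_zero : projLift shear 0 = 0 :=
  (projLift_eq_self_iff shear (re_shear_div_pos _ (expPiI_ne_zero 0))).2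
    (by simp [expPiI, shear_apply])

lemma projLift_dilation_zero : projLift dilation 0 = 0 :=
  (projLift_eq_self_iff dilation (re_dilation_div_pos _ (expPiI_ne_zero 0))).2
    (by simp [expPiI, dilation_apply])

lemma projLift_shear_eq_self_iff (x : ℝ) : projLift shear x = x ↔ Real.sin (π * x) = 0 := by
  have hw := expPiI_ne_zero x
  rw [projLift_eq_self_iff shear (re_shear_div_pos _ hw), im_shear_div _ hw, expPiI_im,
    div_eq_zero_iff, or_iff_left (normSq_pos.2 hw).ne', neg_eq_zero, sq_eq_zero_iff]

lemma projLift_dilation_projLift_shear (x : ℝ) :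
    projLift dilation (projLift shear x) =
      projLift shear (projLift shear (projLift dilation x)) := by
  have hS := injective_of_re_div_pos shear re_shear_div_pos
  have hD := injective_of_re_div_pos dilation re_dilation_div_pos
  have cS := continuous_projLift shear re_shear_div_pos
  have cD := continuous_projLift dilation re_dilation_div_pos
  refine congrFun (eq_of_expPiI_eq (cD.comp cS) (cS.comp (cS.comp cD)) (fun x => ?_) 0
    (by simp [projLift_shear_zero, projLift_dilation_zero])) x
  have hx : expPiI x = expPiI x / ‖expPiI x‖ := by simp [norm_expPiI]
  have lhs := expPiI_projLift_of_expPiI_eq dilation hD (expPiI_projLift_of_expPiI_eq shear hS hx)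
  have rhs := expPiI_projLift_of_expPiI_eq shear hS (expPiI_projLift_of_expPiI_eq shear hS
    (expPiI_projLift_of_expPiI_eq dilation hD hx))
  simp only [Function.comp_apply, lhs, rhs, dilation_shear]

/-- Proposition 2: there is an analytic circle diffeomorphism `f`, distorted in a
finitely generated group (via the relation g f g⁻¹ = f²), whose unique fixed point
`x₀` satisfies f'(x₀) = 1 and f''(x₀) ≠ 0. -/
theorem exists_analytic_distorted_with_parabolic_fixed_point :
    ∃ f g : ℝ → ℝ,
      (∀ x : ℝ, AnalyticAt ℝ f x) ∧ (∀ x : ℝ, AnalyticAt ℝ g x) ∧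
      (∀ x : ℝ, f (x + 1) = f x + 1) ∧ (∀ x : ℝ, g (x + 1) = g x + 1) ∧
      (∀ x : ℝ, 0 < deriv f x) ∧ (∀ x : ℝ, 0 < deriv g x) ∧
      (∀ x : ℝ, g (f x) = f (f (g x))) ∧
      ∃ x₀ ∈ Set.Ico (0:ℝ) 1,
        f x₀ = x₀ ∧ deriv f x₀ = 1 ∧ deriv (deriv f) x₀ ≠ 0 ∧
        (∀ x ∈ Set.Ico x₀ (x₀ + 1), f x = x → x = x₀) := by
  refine ⟨projLift shear, projLift dilation,
    fun x => analyticAt_projLift shear (re_shear_div_pos _ (expPiI_ne_zero x)),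
    fun x => analyticAt_projLift dilation (re_dilation_div_pos _ (expPiI_ne_zero x)),
    projLift_add_one shear, projLift_add_one dilation,
    deriv_projLift_pos shear re_shear_div_pos (by simp [det_shear]),
    deriv_projLift_pos dilation re_dilation_div_pos (by simp [det_dilation]),
    projLift_dilation_projLift_shear, 0, by simp, projLift_shear_zero, ?_, ?_, ?_⟩
  · simp [deriv_projLift shear re_shear_div_pos, expPiI, shear_apply]
  · rw [(hasDerivAt_deriv_projLift shear re_shear_div_pos 0).deriv]
    simp [expPiI, shear_apply, pi_ne_zero, sq]
  · intro x ⟨hx₀, hx₁⟩ hfx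
    rw [projLift_shear_eq_self_iff,
      sin_eq_zero_iff_of_lt_of_lt (by nlinarith [pi_pos]) (by nlinarith [pi_pos])] at hfx
    simpa [pi_ne_zero] using hfx
end

section
/- Let f : ℝ → ℝ be a C^2 circle lift. Let a, b : ℤ → ℝ be sequences with f (a i) = a (i+1), f (b i) = b (i+1), and a i ≤ b i for all i ∈ ℤ. Suppose all the closed intervals [a i, b i] (i ∈ ℤ) are contained in the open interval (0,1) and are pairwise disjoint, and suppose deriv (deriv f) x ≥ 0 for every x lying in any of the intervals [a i, b i]. Then for every finite subset S of ℤ, liminf_{n→∞} (1/n) ∫_0^1 |deriv (deriv (f^[n])) x / deriv (f^[n]) x| dx ≥ Σ_{i ∈ S} ∫_{a i}^{b i} (deriv (deriv f) x / deriv f x) dx. -/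
/-!
Write `η = f''/f' = logDeriv f'`. By the chain rule `η` is an additive cocycle:
`(fⁿ)''/(fⁿ)' = ∑_{k<n} (η ∘ fᵏ) · (fᵏ)'`. Integrating over `I_j = [a j, b j]` and substituting
`y = fᵏ x` gives `∑_{k<n} ∫_{I_{j+k}} η`, a sum of nonnegative terms. The `I_j` are disjoint in
`(0,1)`, so `∫₀¹ |(fⁿ)''/(fⁿ)'|` dominates the sum of these over all `j`; about `n` of the windows
`j + [0,n)` contain the finite set `S`, whence the lower bound `(n - const) · ∑_{i∈S} ∫_{I_i} η`.
The same substitution and the `1`-periodicity of `η` give the upper bound `n ∫₀¹ |η|`, which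
keeps the `liminf` away from its junk value.
-/

open Filter Function Set intervalIntegral MeasureTheory Topology

section Iterate

variable {𝕜 : Type*} [NontriviallyNormedField 𝕜]

theorem ContDiff.iterate {E : Type*} [NormedAddCommGroup E] [NormedSpace 𝕜 E] {f : E → E}
    {n : WithTop ℕ∞} (hf : ContDiff 𝕜 n f) (k : ℕ) : ContDiff 𝕜 n f^[k] := by
  induction k with
  | zero => exact contDiff_id
  | succ k ih => rw [iterate_succ']; exact hf.comp ih

variable {f : 𝕜 → 𝕜}

theorem deriv_iterate_succ (hf : Differentiable 𝕜 f) (n : ℕ) (x : 𝕜) :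
    deriv f^[n + 1] x = deriv f (f^[n] x) * deriv f^[n] x := by
  rw [iterate_succ']
  exact deriv_comp x (hf _) (hf.iterate n x)

theorem deriv_iterate_ne_zero (hf : Differentiable 𝕜 f) (hf' : ∀ x, deriv f x ≠ 0) (n : ℕ)
    (x : 𝕜) : deriv f^[n] x ≠ 0 := by
  induction n generalizing x with
  | zero => simp
  | succ n ih => rw [deriv_iterate_succ hf]; exact mul_ne_zero (hf' _) (ih x)

theorem continuous_logDeriv_deriv (hf : ContDiff 𝕜 2 f) (hf' : ∀ x, deriv f x ≠ 0) :
    Continuous (logDeriv (deriv f)) :=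
  (hf.deriv' (n := 1)).continuous_deriv_one.div hf.differentiable_deriv_two.continuous hf'

theorem logDeriv_deriv_iterate (hf : ContDiff 𝕜 2 f) (hf' : ∀ x, deriv f x ≠ 0) (n : ℕ)
    (x : 𝕜) :
    logDeriv (deriv f^[n]) x =
      ∑ k ∈ Finset.range n, logDeriv (deriv f) (f^[k] x) * deriv f^[k] x := by
  have hd := hf.differentiable two_ne_zero
  induction n with
  | zero => simp [logDeriv_apply]
  | succ n ih =>
    rw [funext (deriv_iterate_succ hd n), logDeriv_mul (f := fun y => deriv f (f^[n] y)) x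
      (hf' _) (deriv_iterate_ne_zero hd hf' n x)
      (hf.differentiable_deriv_two.comp (hd.iterate n) x)
      ((hf.iterate n).differentiable_deriv_two x),
      Finset.sum_range_succ, ih, ← logDeriv_comp (hf.differentiable_deriv_two _) (hd.iterate n x)]
    exact add_comm _ _

end Iterate

theorem iterate_apply_of_apply_eq_succ {α : Type*} {f : α → α} {a : ℤ → α}
    (h : ∀ i, f (a i) = a (i + 1)) (k : ℕ) (i : ℤ) : f^[k] (a i) = a (i + k) := by
  induction k with
  | zero => simp
  | succ k ih => rw [iterate_succ_apply', ih, h, Nat.cast_succ, add_assoc]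

theorem periodic_deriv_of_map_add_eq_add {𝕜 F : Type*} [NontriviallyNormedField 𝕜]
    [NormedAddCommGroup F] [NormedSpace 𝕜 F] {g : 𝕜 → F} {p : 𝕜} {c : F}
    (h : ∀ x, g (x + p) = g x + c) : Periodic (deriv g) p := fun x => by
  rw [← deriv_comp_add_const, funext h, deriv_add_const]

section CircleLift

variable {f : ℝ → ℝ}

theorem deriv_iterate_pos (hf : Differentiable ℝ f) (hpos : ∀ x, 0 < deriv f x) (n : ℕ)
    (x : ℝ) : 0 < deriv f^[n] x := by
  induction n generalizing x with
  | zero => simp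
  | succ n ih => rw [deriv_iterate_succ hf]; exact mul_pos (hpos _) (ih x)

theorem integral_comp_iterate_mul_deriv (hf : ContDiff ℝ 1 f) {g : ℝ → ℝ} (hg : Continuous g)
    (k : ℕ) (u v : ℝ) :
    ∫ x in u..v, g (f^[k] x) * deriv f^[k] x = ∫ x in f^[k] u..f^[k] v, g x :=
  integral_comp_mul_deriv (fun x _ => ((hf.iterate k).differentiable one_ne_zero x).hasDerivAt)
    (hf.iterate k).continuous_deriv_one.continuousOn hg

theorem integral_logDeriv_deriv_iterate (hf : ContDiff ℝ 2 f) (hf' : ∀ x, deriv f x ≠ 0)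
    (n : ℕ) (u v : ℝ) :
    ∫ x in u..v, logDeriv (deriv f^[n]) x =
      ∑ k ∈ Finset.range n, ∫ x in f^[k] u..f^[k] v, logDeriv (deriv f) x := by
  have hη := continuous_logDeriv_deriv hf hf'
  simp_rw [logDeriv_deriv_iterate hf hf' n]
  have hterm (k : ℕ) : Continuous fun x => logDeriv (deriv f) (f^[k] x) * deriv f^[k] x :=
    (hη.comp (hf.iterate k).continuous).mul ((hf.iterate k).continuous_deriv one_le_two)
  rw [integral_finsetSum fun k _ => (hterm k).intervalIntegrable _ _]
  simp_rw [integral_comp_iterate_mul_deriv (hf.of_le one_le_two) hη]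

theorem integral_abs_logDeriv_deriv_iterate_le (hf : ContDiff ℝ 2 f) (hpos : ∀ x, 0 < deriv f x)
    (hlift : ∀ x, f (x + 1) = f x + 1) (n : ℕ) :
    ∫ x in (0 : ℝ)..1, |logDeriv (deriv f^[n]) x| ≤
      n * ∫ x in (0 : ℝ)..1, |logDeriv (deriv f) x| := by
  have hd := hf.differentiable two_ne_zero
  have hf' (x : ℝ) : deriv f x ≠ 0 := (hpos x).ne'
  have hη := continuous_logDeriv_deriv hf hf'
  have hp1 : Periodic (deriv f) 1 := periodic_deriv_of_map_add_eq_add hlift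
  have hp2 : Periodic (deriv (deriv f)) 1 :=
    periodic_deriv_of_map_add_eq_add (c := 0) fun x => by rw [hp1 x, add_zero]
  have hperiodic : Periodic (fun x => |logDeriv (deriv f) x|) 1 := fun x => by
    simp only [logDeriv_apply, hp1 x, hp2 x]
  have hterm (k : ℕ) : Continuous fun x => |logDeriv (deriv f) (f^[k] x)| * deriv f^[k] x :=
    (hη.comp (hf.iterate k).continuous).abs.mul ((hf.iterate k).continuous_deriv one_le_two)
  calc ∫ x in (0 : ℝ)..1, |logDeriv (deriv f^[n]) x|
      ≤ ∫ x in (0 : ℝ)..1,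
          ∑ k ∈ Finset.range n, |logDeriv (deriv f) (f^[k] x)| * deriv f^[k] x := by
        refine integral_mono_on zero_le_one ?_ ?_ fun x _ => ?_
        · exact (continuous_logDeriv_deriv (hf.iterate n)
            (deriv_iterate_ne_zero hd hf' n)).abs.intervalIntegrable _ _
        · exact (continuous_finsetSum _ fun k _ => hterm k).intervalIntegrable _ _
        rw [logDeriv_deriv_iterate hf hf']
        refine (Finset.abs_sum_le_sum_abs _ _).trans_eq (Finset.sum_congr rfl fun k _ => ?_)
        rw [abs_mul, abs_of_pos (deriv_iterate_pos hd hpos k x)]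
    _ = ∑ k ∈ Finset.range n, ∫ x in f^[k] 0..f^[k] 0 + 1, |logDeriv (deriv f) x| := by
        rw [integral_finsetSum fun k _ => (hterm k).intervalIntegrable _ _]
        refine Finset.sum_congr rfl fun k _ => ?_
        have hk : f^[k] 1 = f^[k] 0 + 1 := by simpa using Commute.iterate_left hlift k 0
        rw [integral_comp_iterate_mul_deriv (hf.of_le one_le_two) hη.abs, hk]
    _ = n * ∫ x in (0 : ℝ)..1, |logDeriv (deriv f) x| := by
        simp [hperiodic.intervalIntegral_add_eq _ 0]

end CircleLift

theorem sum_integral_le_integral_abs_of_pairwise_disjoint {ι : Type*} {g : ℝ → ℝ} {u v : ℝ}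
    (huv : u ≤ v) (hg : IntegrableOn g (Ioc u v)) {a b : ι → ℝ} {J : Finset ι}
    (hab : ∀ j ∈ J, a j ≤ b j) (hsub : ∀ j ∈ J, Ioc (a j) (b j) ⊆ Ioc u v)
    (hdisj : (J : Set ι).Pairwise (Disjoint on fun j => Ioc (a j) (b j))) :
    ∑ j ∈ J, ∫ x in a j..b j, g x ≤ ∫ x in u..v, |g x| := by
  have hint (j) (hj : j ∈ J) : IntegrableOn g (Ioc (a j) (b j)) := hg.mono_set (hsub j hj)
  calc ∑ j ∈ J, ∫ x in a j..b j, g x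
      ≤ ∑ j ∈ J, ∫ x in Ioc (a j) (b j), |g x| := Finset.sum_le_sum fun j hj => by
        rw [integral_of_le (hab j hj)]
        exact setIntegral_mono (hint j hj) (hint j hj).abs fun x => le_abs_self _
    _ = ∫ x in ⋃ j ∈ J, Ioc (a j) (b j), |g x| :=
        (integral_biUnion_finset J (fun _ _ => measurableSet_Ioc) hdisj
          fun j hj => (hint j hj).abs).symm
    _ ≤ ∫ x in Ioc u v, |g x| :=
        setIntegral_mono_set hg.abs (Eventually.of_forall fun _ => abs_nonneg _)
          (iUnion₂_subset hsub).eventuallyLE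
    _ = ∫ x in u..v, |g x| := (integral_of_le huv).symm

theorem sum_le_sum_range_add {β : Type*} [AddCommMonoid β] [PartialOrder β]
    [IsOrderedAddMonoid β] {c : ℤ → β} (hc : ∀ i, 0 ≤ c i) {S : Finset ℤ} {j : ℤ} {n : ℕ}
    (hS : ∀ i ∈ S, j ≤ i ∧ i < j + n) :
    ∑ i ∈ S, c i ≤ ∑ k ∈ Finset.range n, c (j + k) := by
  rw [← Finset.sum_image (g := fun k : ℕ => j + k) fun _ _ _ _ h => by simpa using h]
  refine Finset.sum_le_sum_of_subset_of_nonneg (fun i hi => ?_) fun i _ _ => hc i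
  obtain ⟨hji, hij⟩ := hS i hi
  exact Finset.mem_image.mpr ⟨(i - j).toNat, Finset.mem_range.mpr (by omega), by omega⟩

theorem sub_mul_sum_le_sum_Icc_sum_range_add {c : ℤ → ℝ} (hc : ∀ i, 0 ≤ c i) {S : Finset ℤ}
    {m M : ℤ} (hS : ∀ i ∈ S, m ≤ i ∧ i ≤ M) (n : ℕ) :
    ((n : ℝ) - (M + 1 - m)) * ∑ i ∈ S, c i ≤
      ∑ j ∈ Finset.Icc (M + 1 - n) m, ∑ k ∈ Finset.range n, c (j + k) := by
  have hcard : (n : ℝ) - (M + 1 - m) ≤ (Finset.Icc (M + 1 - n) m).card := by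
    have := Int.card_Icc (M + 1 - n) m
    exact_mod_cast (by omega : (n : ℤ) - (M + 1 - m) ≤ (Finset.Icc (M + 1 - n) m).card)
  calc ((n : ℝ) - (M + 1 - m)) * ∑ i ∈ S, c i
      ≤ (Finset.Icc (M + 1 - n) m).card * ∑ i ∈ S, c i :=
        mul_le_mul_of_nonneg_right hcard (Finset.sum_nonneg fun i _ => hc i)
    _ = ∑ j ∈ Finset.Icc (M + 1 - n) m, ∑ i ∈ S, c i := by rw [Finset.sum_const, nsmul_eq_mul]
    _ ≤ _ := Finset.sum_le_sum fun j hj => sum_le_sum_range_add hc fun i hi => by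
        have := Finset.mem_Icc.mp hj
        have := hS i hi
        omega

theorem le_liminf_of_linear_bounds {I : ℕ → ℝ} {T D C : ℝ} (hlow : ∀ n, (n - D) * T ≤ I n)
    (hup : ∀ n, I n ≤ n * C) : T ≤ liminf (fun n : ℕ => (1 / (n : ℝ)) * I n) atTop := by
  have hpos : ∀ᶠ n : ℕ in atTop, (0 : ℝ) < n :=
    (eventually_ge_atTop 1).mono fun n hn => by exact_mod_cast hn
  have hcobdd : IsCoboundedUnder (· ≥ ·) atTop fun n : ℕ => (1 / (n : ℝ)) * I n :=
    isCoboundedUnder_ge_of_eventually_le atTop <| hpos.mono fun n hn => by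
      rw [one_div_mul_eq_div, div_le_iff₀' hn]; exact hup n
  have hlim : Tendsto (fun n : ℕ => (1 - D * (1 / (n : ℝ))) * T) atTop (𝓝 T) := by
    simpa using ((tendsto_one_div_atTop_nhds_zero_nat.const_mul D).const_sub 1).mul_const T
  rw [← hlim.liminf_eq]
  refine liminf_le_liminf (hpos.mono fun n hn => ?_) hlim.isBoundedUnder_ge hcobdd
  calc (1 - D * (1 / (n : ℝ))) * T = 1 / n * ((n - D) * T) := by field_simp
    _ ≤ 1 / n * I n := mul_le_mul_of_nonneg_left (hlow n) (by positivity)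

/-- Criterion for C^{1+AC} non-distortion (Lemma 3): if f'' ≥ 0 on the whole orbit of a
subarc, then d(fⁿ, id) grows at least linearly, with rate the sum over the orbit of
∫ f''/f'. -/
theorem c1ac_nondistortion_criterion
    (f : ℝ → ℝ) (hf : ContDiff ℝ 2 f)
    (hlift : ∀ x : ℝ, f (x + 1) = f x + 1)
    (hpos : ∀ x : ℝ, 0 < deriv f x)
    (a b : ℤ → ℝ)
    (hfa : ∀ i : ℤ, f (a i) = a (i + 1))
    (hfb : ∀ i : ℤ, f (b i) = b (i + 1))
    (hab : ∀ i : ℤ, a i ≤ b i)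
    (hsub : ∀ i : ℤ, Set.Icc (a i) (b i) ⊆ Set.Ioo (0:ℝ) 1)
    (hdisj : ∀ i j : ℤ, i ≠ j → Disjoint (Set.Icc (a i) (b i)) (Set.Icc (a j) (b j)))
    (hconvex : ∀ i : ℤ, ∀ x ∈ Set.Icc (a i) (b i), 0 ≤ deriv (deriv f) x) :
    ∀ S : Finset ℤ,
      (∑ i ∈ S, ∫ x in (a i)..(b i), deriv (deriv f) x / deriv f x) ≤
        Filter.liminf
          (fun n : ℕ => (1 / (n : ℝ)) *
            ∫ x in (0:ℝ)..1, |deriv (deriv (f^[n])) x / deriv (f^[n]) x|)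
          Filter.atTop := by
  intro S
  have hf' (x : ℝ) : deriv f x ≠ 0 := (hpos x).ne'
  set c : ℤ → ℝ := fun i => ∫ x in a i..b i, logDeriv (deriv f) x
  have hc (i : ℤ) : 0 ≤ c i :=
    integral_nonneg (hab i) fun x hx => div_nonneg (hconvex i x hx) (hpos x).le
  obtain ⟨m, hm⟩ := S.bddBelow
  obtain ⟨M, hM⟩ := S.bddAbove
  refine le_liminf_of_linear_bounds (D := M + 1 - m) (fun n => ?_)
    (integral_abs_logDeriv_deriv_iterate_le hf hpos hlift)
  calc ((n : ℝ) - (M + 1 - m)) * ∑ i ∈ S, c i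
      ≤ ∑ j ∈ Finset.Icc (M + 1 - n) m, ∑ k ∈ Finset.range n, c (j + k) :=
        sub_mul_sum_le_sum_Icc_sum_range_add hc (fun i hi => ⟨hm hi, hM hi⟩) n
    _ = ∑ j ∈ Finset.Icc (M + 1 - n) m, ∫ x in a j..b j, logDeriv (deriv f^[n]) x := by
        simp only [integral_logDeriv_deriv_iterate hf hf', iterate_apply_of_apply_eq_succ hfa,
          iterate_apply_of_apply_eq_succ hfb, c]
    _ ≤ ∫ x in (0 : ℝ)..1, |logDeriv (deriv f^[n]) x| :=
        sum_integral_le_integral_abs_of_pairwise_disjoint zero_le_one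
          (continuous_logDeriv_deriv (hf.iterate n)
            (deriv_iterate_ne_zero (hf.differentiable two_ne_zero) hf' n)).integrableOn_Ioc
          (fun j _ => hab j)
          (fun j _ => Ioc_subset_Icc_self.trans ((hsub j).trans Ioo_subset_Ioc_self))
          fun i _ j _ hij => (hdisj i j hij).mono Ioc_subset_Icc_self Ioc_subset_Icc_self
end

section
/- Let f : ℝ → ℝ be twice continuously differentiable with f 0 = 0, f 1 = 1, and deriv f x > 0 for all x ∈ [0,1]. If M ≥ 0 and ∫_0^1 |deriv (deriv f) x / deriv f x| dx ≤ M, then for every x ∈ [0,1], exp(−M) ≤ deriv f x ≤ exp(M). -/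
/-!
By the mean value theorem `f' c = 1` for some `c ∈ (0,1)`. Since `f''/f'` is the derivative
of `log f'`, for every `x ∈ [0,1]` we get
`|log f'(x)| = |∫_c^x f''/f'| ≤ ∫_0^1 |f''/f'| ≤ M`.
-/

open Real Set intervalIntegral

lemma exists_mem_Ioo_deriv_eq_one {f : ℝ → ℝ} (hf : Differentiable ℝ f)
    (h0 : f 0 = 0) (h1 : f 1 = 1) : ∃ c ∈ Ioo (0 : ℝ) 1, deriv f c = 1 := by
  obtain ⟨c, hc, hslope⟩ :=
    exists_deriv_eq_slope f one_pos hf.continuous.continuousOn hf.differentiableOn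
  exact ⟨c, hc, by simpa [h0, h1] using hslope⟩

lemma integral_deriv_div_eq_log_sub_log {g : ℝ → ℝ} {a b : ℝ} (hg : ContDiff ℝ 1 g)
    (hne : ∀ t ∈ uIcc a b, g t ≠ 0) :
    ∫ t in a..b, deriv g t / g t = log (g b) - log (g a) := by
  refine integral_eq_sub_of_hasDerivAt
    (fun t ht ↦ ((hg.differentiable one_ne_zero t).hasDerivAt).log (hne t ht)) ?_
  exact ((hg.continuous_deriv le_rfl).continuousOn.div hg.continuous.continuousOn
    hne).intervalIntegrable

lemma abs_log_sub_log_le_integral_abs_deriv_div {g : ℝ → ℝ} {a b c x : ℝ}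
    (hg : ContDiff ℝ 1 g) (hne : ∀ t ∈ Icc a b, g t ≠ 0) (hc : c ∈ Icc a b)
    (hx : x ∈ Icc a b) :
    |log (g x) - log (g c)| ≤ ∫ t in a..b, |deriv g t / g t| := by
  have hab : a ≤ b := hc.1.trans hc.2
  have hsub : uIcc c x ⊆ Icc a b := uIcc_subset_Icc hc hx
  have hcont : ContinuousOn (fun t ↦ deriv g t / g t) (Icc a b) :=
    (hg.continuous_deriv le_rfl).continuousOn.div hg.continuous.continuousOn hne
  rw [← integral_deriv_div_eq_log_sub_log hg fun t ht ↦ hne t (hsub ht)]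
  calc |∫ t in c..x, deriv g t / g t|
      ≤ |(∫ t in c..x, |deriv g t / g t|)| := by
        simpa only [Real.norm_eq_abs] using
          norm_integral_le_abs_integral_norm (f := fun t ↦ deriv g t / g t)
            (μ := MeasureTheory.volume)
    _ ≤ |(∫ t in a..b, |deriv g t / g t|)| := by
        refine abs_integral_mono_interval ?_ (.of_forall fun t ↦ abs_nonneg _)
          (hcont.abs.intervalIntegrable_of_Icc hab)
        simp only [uIoc_of_le hab]
        exact Ioc_subset_Ioc (le_min hc.1 hx.1) (max_le hc.2 hx.2)
    _ = ∫ t in a..b, |deriv g t / g t| :=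
        abs_of_nonneg (integral_nonneg hab fun t _ ↦ abs_nonneg _)

theorem deriv_bounds_of_nonlinearity_integral_bound_general
    (f : ℝ → ℝ) (hf : ContDiff ℝ 2 f)
    (h0 : f 0 = 0) (h1 : f 1 = 1)
    (hpos : ∀ x ∈ Set.Icc (0:ℝ) 1, 0 < deriv f x)
    (M : ℝ)
    (hint : (∫ x in (0:ℝ)..1, |deriv (deriv f) x / deriv f x|) ≤ M) :
    ∀ x ∈ Set.Icc (0:ℝ) 1, Real.exp (-M) ≤ deriv f x ∧ deriv f x ≤ Real.exp M := by
  intro x hx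
  obtain ⟨c, hc, hc1⟩ := exists_mem_Ioo_deriv_eq_one (hf.differentiable two_ne_zero) h0 h1
  have hlog : |log (deriv f x)| ≤ M := by
    have := abs_log_sub_log_le_integral_abs_deriv_div (hf.deriv' (n := 1))
      (fun t ht ↦ (hpos t ht).ne') (Ioo_subset_Icc_self hc) hx
    rw [hc1, log_one, sub_zero] at this
    exact this.trans hint
  rw [abs_le] at hlog
  exact ⟨(le_log_iff_exp_le (hpos x hx)).mp hlog.1, (log_le_iff_le_exp (hpos x hx)).mp hlog.2⟩

/-- If ∫₀¹ |f''/f'| ≤ M for an interval diffeomorphism f, then e^{-M} ≤ f' ≤ e^M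
on [0,1]. -/
theorem deriv_bounds_of_nonlinearity_integral_bound
    (f : ℝ → ℝ) (hf : ContDiff ℝ 2 f)
    (h0 : f 0 = 0) (h1 : f 1 = 1)
    (hpos : ∀ x ∈ Set.Icc (0:ℝ) 1, 0 < deriv f x)
    (M : ℝ) (hM : 0 ≤ M)
    (hint : (∫ x in (0:ℝ)..1, |deriv (deriv f) x / deriv f x|) ≤ M) :
    ∀ x ∈ Set.Icc (0:ℝ) 1, Real.exp (-M) ≤ deriv f x ∧ deriv f x ≤ Real.exp M :=
  deriv_bounds_of_nonlinearity_integral_bound_general f hf h0 h1 hpos M hint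
end

section
/- Let f : ℝ → ℝ be twice continuously differentiable with f 0 = 0, f 1 = 1, and deriv f x > 0 for all x ∈ [0,1], and suppose M ≥ 0 satisfies ∫_0^1 |deriv (deriv f) x / deriv f x| dx ≤ M. For t ∈ [0,1], define g_t : ℝ → ℝ by g_t x = t·x + (1−t)·(f x). Then each g_t is twice continuously differentiable with g_t 0 = 0, g_t 1 = 1, and deriv g_t x > 0 for all x ∈ [0,1]; and for all s, t ∈ [0,1], ∫_0^1 |deriv (deriv g_t) x / deriv g_t x − deriv (deriv g_s) x / deriv g_s x| dx ≤ M · exp(2M) · |t − s|. -/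
/-!
Write `q = f''/f' = (log f')'`. Since `f' = 1` somewhere on `[0,1]` (mean value theorem),
`|log f'| ≤ ∫₀¹ |q| ≤ M` on `[0,1]`. With `D_t = t + (1-t) f' ≥ min 1 f'` one has
`g_t''/g_t' = (1-t) f''/D_t`, hence `g_t''/g_t' - g_s''/g_s' = q · f'/(D_t D_s) · (s - t)`
and `f'/(D_t D_s) ≤ max f' (1/f') ≤ e^{|log f'|} ≤ e^M`; integrate.
-/

open Set Real MeasureTheory intervalIntegral

theorem abs_sub_le_integral_abs_deriv {u u' : ℝ → ℝ} {a b c x : ℝ}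
    (hu : ∀ y ∈ Icc a b, HasDerivAt u (u' y) y) (hu' : IntervalIntegrable u' volume a b)
    (hc : c ∈ Icc a b) (hx : x ∈ Icc a b) :
    |u x - u c| ≤ ∫ y in a..b, |u' y| := by
  have hab : a ≤ b := hc.1.trans hc.2
  have hsub : uIcc c x ⊆ uIcc a b := uIcc_of_le hab ▸ uIcc_subset_Icc hc hx
  rw [← integral_eq_sub_of_hasDerivAt (fun y hy => hu y (uIcc_of_le hab ▸ hsub hy))
    (hu'.mono_set hsub)]
  calc |∫ y in c..x, u' y| ≤ |(∫ y in c..x, |u' y|)| := by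
        simpa only [Real.norm_eq_abs] using
          norm_integral_le_abs_integral_norm (f := u') (μ := volume)
    _ ≤ |(∫ y in a..b, |u' y|)| :=
        abs_integral_mono_interval (uIoc_subset_uIoc_of_uIcc_subset_uIcc hsub)
          (ae_of_all _ fun y => abs_nonneg _) hu'.abs
    _ = ∫ y in a..b, |u' y| := abs_of_nonneg (integral_nonneg hab fun y _ => abs_nonneg _)

theorem abs_log_le_integral_abs_logDeriv {φ φ' : ℝ → ℝ} {a b c x : ℝ}
    (hφ : ∀ y ∈ Icc a b, HasDerivAt φ (φ' y) y) (hpos : ∀ y ∈ Icc a b, 0 < φ y)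
    (hq : IntervalIntegrable (fun y => φ' y / φ y) volume a b)
    (hc : c ∈ Icc a b) (hc1 : φ c = 1) (hx : x ∈ Icc a b) :
    |log (φ x)| ≤ ∫ y in a..b, |φ' y / φ y| := by
  simpa [hc1] using abs_sub_le_integral_abs_deriv (u := fun y => log (φ y))
    (fun y hy => (hφ y hy).log (hpos y hy).ne') hq hc hx

theorem intervalIntegrable_deriv_deriv_div_deriv {f : ℝ → ℝ} {a b : ℝ}
    (hf : ContDiff ℝ 2 f) (hab : a ≤ b) (hpos : ∀ x ∈ Icc a b, 0 < deriv f x) :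
    IntervalIntegrable (fun x => deriv (deriv f) x / deriv f x) volume a b := by
  have hf1 : ContDiff ℝ 1 (deriv f) := hf.deriv'
  exact ((hf1.continuous_deriv le_rfl).continuousOn.div hf1.continuous.continuousOn
    fun x hx => (hpos x hx).ne').intervalIntegrable_of_Icc hab

theorem abs_log_deriv_le_integral_abs_deriv_deriv_div_deriv {f : ℝ → ℝ} {a b x : ℝ}
    (hab : a < b) (hf : ContDiff ℝ 2 f) (hfab : f b - f a = b - a)
    (hpos : ∀ y ∈ Icc a b, 0 < deriv f y) (hx : x ∈ Icc a b) :
    |log (deriv f x)| ≤ ∫ y in a..b, |deriv (deriv f) y / deriv f y| := by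
  have hdf : Differentiable ℝ f := hf.differentiable two_ne_zero
  obtain ⟨c, hc, hc1⟩ := exists_deriv_eq_slope f hab hdf.continuous.continuousOn
    hdf.differentiableOn
  rw [hfab, div_self (sub_ne_zero.2 hab.ne')] at hc1
  exact abs_log_le_integral_abs_logDeriv
    (fun y _ => ((hf.deriv' (n := 1)).differentiable one_ne_zero y).hasDerivAt) hpos
    (intervalIntegrable_deriv_deriv_div_deriv hf hab.le hpos) (Ioo_subset_Icc_self hc) hc1
    hx

theorem deriv_lerp_id {f : ℝ → ℝ} (hf : Differentiable ℝ f) (t : ℝ) :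
    deriv (fun x => t * x + (1 - t) * f x) = fun x => t + (1 - t) * deriv f x :=
  funext fun x => by
    simpa using (((hasDerivAt_id x).const_mul t).fun_add
      ((hf x).hasDerivAt.const_mul (1 - t))).deriv

theorem deriv_deriv_lerp_id {f : ℝ → ℝ} (hf : Differentiable ℝ f) (t : ℝ) :
    deriv (deriv (fun x => t * x + (1 - t) * f x)) = fun x => (1 - t) * deriv (deriv f) x := by
  rw [deriv_lerp_id hf, deriv_const_add', deriv_const_mul_field']

theorem min_one_le_lerp {a t : ℝ} (ht : t ∈ Icc (0 : ℝ) 1) : min 1 a ≤ t + (1 - t) * a := by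
  nlinarith [mul_nonneg ht.1 (sub_nonneg.2 (min_le_left 1 a)),
    mul_nonneg (sub_nonneg.2 ht.2) (sub_nonneg.2 (min_le_right 1 a))]

theorem lerp_pos {a t : ℝ} (ha : 0 < a) (ht : t ∈ Icc (0 : ℝ) 1) : 0 < t + (1 - t) * a :=
  (lt_min one_pos ha).trans_le (min_one_le_lerp ht)

theorem max_self_inv_le_exp_abs_log {a : ℝ} (ha : 0 < a) : max a a⁻¹ ≤ exp |log a| :=
  max_le (by simpa [exp_log ha] using exp_le_exp.2 (le_abs_self (log a)))
    (by simpa [exp_neg, exp_log ha] using exp_le_exp.2 (neg_le_abs (log a)))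

theorem div_mul_lerp_le_max {a s t : ℝ} (ha : 0 < a) (hs : s ∈ Icc (0 : ℝ) 1)
    (ht : t ∈ Icc (0 : ℝ) 1) :
    a / ((t + (1 - t) * a) * (s + (1 - s) * a)) ≤ max a a⁻¹ := by
  have hm : 0 < min 1 a := lt_min one_pos ha
  have hD : min 1 a ^ 2 ≤ (t + (1 - t) * a) * (s + (1 - s) * a) := by
    rw [sq]
    exact mul_le_mul (min_one_le_lerp ht) (min_one_le_lerp hs) hm.le
      (hm.trans_le (min_one_le_lerp ht)).le
  calc a / ((t + (1 - t) * a) * (s + (1 - s) * a)) ≤ a / min 1 a ^ 2 :=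
        div_le_div_of_nonneg_left ha.le (by positivity) hD
    _ = max a a⁻¹ := by
      rcases le_total a 1 with h | h
      · rw [min_eq_right h, max_eq_right (h.trans ((one_le_inv₀ ha).2 h))]
        field_simp
      · rw [min_eq_left h, max_eq_left (inv_le_one_of_one_le₀ h |>.trans h)]
        simp

theorem lerp_ratio_sub_lerp_ratio {a b s t : ℝ} (hs : s + (1 - s) * a ≠ 0)
    (ht : t + (1 - t) * a ≠ 0) :
    (1 - t) * b / (t + (1 - t) * a) - (1 - s) * b / (s + (1 - s) * a) =
      b * (s - t) / ((t + (1 - t) * a) * (s + (1 - s) * a)) := by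
  rw [div_sub_div _ _ ht hs]
  ring

theorem abs_lerp_ratio_sub_lerp_ratio_le {a b s t : ℝ} (ha : 0 < a) (hs : s ∈ Icc (0 : ℝ) 1)
    (ht : t ∈ Icc (0 : ℝ) 1) :
    |(1 - t) * b / (t + (1 - t) * a) - (1 - s) * b / (s + (1 - s) * a)| ≤
      |b / a| * exp |log a| * |t - s| := by
  have hDt := lerp_pos ha ht
  have hDs := lerp_pos ha hs
  rw [lerp_ratio_sub_lerp_ratio hDs.ne' hDt.ne']
  calc |b * (s - t) / ((t + (1 - t) * a) * (s + (1 - s) * a))|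
      = |b / a| * (a / ((t + (1 - t) * a) * (s + (1 - s) * a))) * |t - s| := by
        rw [abs_div, abs_mul, abs_div, abs_of_pos ha, abs_of_pos (mul_pos hDt hDs),
          abs_sub_comm]
        field_simp
    _ ≤ |b / a| * exp |log a| * |t - s| := by
        gcongr
        exact (div_mul_lerp_le_max ha hs ht).trans (max_self_inv_le_exp_abs_log ha)

theorem intervalIntegral.integral_mono_on_of_nonneg {f g : ℝ → ℝ} {a b : ℝ} (hab : a ≤ b)
    (hg : IntervalIntegrable g volume a b) (hf : ∀ x ∈ Icc a b, 0 ≤ f x)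
    (h : ∀ x ∈ Icc a b, f x ≤ g x) :
    ∫ x in a..b, f x ≤ ∫ x in a..b, g x := by
  rw [integral_of_le hab, integral_of_le hab]
  exact integral_mono_of_nonneg
    (ae_restrict_of_forall_mem measurableSet_Ioc fun x hx => hf x (Ioc_subset_Icc_self hx))
    hg.1 (ae_restrict_of_forall_mem measurableSet_Ioc fun x hx => h x (Ioc_subset_Icc_self hx))

theorem interval_interpolation_nonlinearity_estimate_general
    (f : ℝ → ℝ) (hf : ContDiff ℝ 2 f)
    (h0 : f 0 = 0) (h1 : f 1 = 1)
    (hpos : ∀ x ∈ Set.Icc (0:ℝ) 1, 0 < deriv f x)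
    (M : ℝ)
    (hint : (∫ x in (0:ℝ)..1, |deriv (deriv f) x / deriv f x|) ≤ M)
    (g : ℝ → ℝ → ℝ)
    (hg : ∀ t x : ℝ, g t x = t * x + (1 - t) * f x) :
    (∀ t ∈ Set.Icc (0:ℝ) 1,
        ContDiff ℝ 2 (g t) ∧ g t 0 = 0 ∧ g t 1 = 1 ∧
        ∀ x ∈ Set.Icc (0:ℝ) 1, 0 < deriv (g t) x) ∧
      ∀ s ∈ Set.Icc (0:ℝ) 1, ∀ t ∈ Set.Icc (0:ℝ) 1,
        (∫ x in (0:ℝ)..1,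
            |deriv (deriv (g t)) x / deriv (g t) x -
              deriv (deriv (g s)) x / deriv (g s) x|) ≤
          M * Real.exp (2 * M) * |t - s| := by
  obtain rfl : g = fun t x => t * x + (1 - t) * f x := funext fun t => funext (hg t)
  have hdf : Differentiable ℝ f := hf.differentiable two_ne_zero
  have hlog : ∀ x ∈ Icc (0 : ℝ) 1, |log (deriv f x)| ≤ M := fun x hx =>
    (abs_log_deriv_le_integral_abs_deriv_deriv_div_deriv zero_lt_one hf (by simp [h0, h1]) hpos
      hx).trans hint
  have hM : 0 ≤ M := (integral_nonneg zero_le_one fun _ _ => abs_nonneg _).trans hint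
  refine ⟨fun t ht => ⟨by fun_prop, by simp [h0], by simp [h1], fun x hx => ?_⟩,
    fun s hs t ht => ?_⟩
  · rw [deriv_lerp_id hdf]
    exact lerp_pos (hpos x hx) ht
  rw [deriv_deriv_lerp_id hdf, deriv_deriv_lerp_id hdf, deriv_lerp_id hdf, deriv_lerp_id hdf]
  calc _ ≤ ∫ x in (0:ℝ)..1, |deriv (deriv f) x / deriv f x| * exp M * |t - s| :=
        integral_mono_on_of_nonneg zero_le_one
          ((intervalIntegrable_deriv_deriv_div_deriv hf zero_le_one hpos).abs.mul_const
            _ |>.mul_const _)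
          (fun _ _ => abs_nonneg _) fun x hx =>
            (abs_lerp_ratio_sub_lerp_ratio_le (hpos x hx) hs ht).trans (by gcongr; exact hlog x hx)
    _ = (∫ x in (0:ℝ)..1, |deriv (deriv f) x / deriv f x|) * exp M * |t - s| := by
        rw [intervalIntegral.integral_mul_const, intervalIntegral.integral_mul_const]
    _ ≤ M * exp (2 * M) * |t - s| := by gcongr; linarith

/-- The interpolation estimate in Lemma 4.2: the straight-line path t ↦ t·id + (1−t)·f
moves with speed at most M·e^{2M} in the metric d(f,g) = ∫₀¹|f''/f' − g''/g'|. -/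
theorem interval_interpolation_nonlinearity_estimate
    (f : ℝ → ℝ) (hf : ContDiff ℝ 2 f)
    (h0 : f 0 = 0) (h1 : f 1 = 1)
    (hpos : ∀ x ∈ Set.Icc (0:ℝ) 1, 0 < deriv f x)
    (M : ℝ) (hM : 0 ≤ M)
    (hint : (∫ x in (0:ℝ)..1, |deriv (deriv f) x / deriv f x|) ≤ M)
    (g : ℝ → ℝ → ℝ)
    (hg : ∀ t x : ℝ, g t x = t * x + (1 - t) * f x) :
    (∀ t ∈ Set.Icc (0:ℝ) 1,
        ContDiff ℝ 2 (g t) ∧ g t 0 = 0 ∧ g t 1 = 1 ∧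
        ∀ x ∈ Set.Icc (0:ℝ) 1, 0 < deriv (g t) x) ∧
      ∀ s ∈ Set.Icc (0:ℝ) 1, ∀ t ∈ Set.Icc (0:ℝ) 1,
        (∫ x in (0:ℝ)..1,
            |deriv (deriv (g t)) x / deriv (g t) x -
              deriv (deriv (g s)) x / deriv (g s) x|) ≤
          M * Real.exp (2 * M) * |t - s| :=
  interval_interpolation_nonlinearity_estimate_general f hf h0 h1 hpos M hint g hg
end

section
/- Let f : ℝ → ℝ be a C^1 circle lift and M ≥ 0 with |log(deriv f x)| ≤ M for all x ∈ ℝ. For t ∈ [0,1], define g_t : ℝ → ℝ by g_t x = t·x + (1−t)·(f x). Then each g_t is a C^1 circle lift (g_t is continuously differentiable, g_t(x+1) = g_t(x) + 1 for all x, and deriv g_t x > 0 for all x), and for all s, t ∈ [0,1], sup_{x ∈ ℝ} |log(deriv g_t x) − log(deriv g_s x)| ≤ (exp M − 1) · |t − s|. -/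
/-!
The derivative of `g t` is the convex combination `t + (1 - t) f'` of `1` and `f'`, so it
never drops below `m = min 1 f'`, and on `[m, ∞)` the logarithm is `1/m`-Lipschitz. Hence
`|log g_t' - log g_s'| ≤ |t - s| |1 - f'| / m`, and `|1 - c| / min 1 c = exp |log c| - 1`.
-/

open Real Set

def IsC1CircleLift (f : ℝ → ℝ) : Prop :=
  ContDiff ℝ 1 f ∧ (∀ x, f (x + 1) = f x + 1) ∧ ∀ x, 0 < deriv f x

theorem min_le_mul_add_one_sub_mul {a b t : ℝ} (ht : t ∈ Icc (0 : ℝ) 1) :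
    min a b ≤ t * a + (1 - t) * b := by
  simpa using Convex.min_le_combo a b ht.1 (sub_nonneg.2 ht.2) (add_sub_cancel t 1)

theorem log_sub_log_le_div {a b : ℝ} (ha : 0 < a) (hb : 0 < b) :
    log a - log b ≤ (a - b) / b := by
  rw [← log_div ha.ne' hb.ne']
  calc log (a / b) ≤ a / b - 1 := log_le_sub_one_of_pos (div_pos ha hb)
    _ = (a - b) / b := by field_simp

theorem abs_log_sub_log_le_of_le {a b m : ℝ} (hm : 0 < m) (ha : m ≤ a) (hb : m ≤ b) :
    |log a - log b| ≤ |a - b| / m := by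
  have key : ∀ {x y : ℝ}, m ≤ x → m ≤ y → log x - log y ≤ |x - y| / m := fun hx hy =>
    (log_sub_log_le_div (hm.trans_le hx) (hm.trans_le hy)).trans <|
      div_le_div₀ (abs_nonneg _) (le_abs_self _) hm hy
  rw [abs_sub_le_iff]
  exact ⟨key ha hb, abs_sub_comm a b ▸ key hb ha⟩

theorem abs_one_sub_eq_mul_min {c : ℝ} (hc : 0 < c) :
    |1 - c| = (exp |log c| - 1) * min 1 c := by
  rcases le_total c 1 with h | h
  · rw [abs_of_nonneg (sub_nonneg.2 h), abs_of_nonpos (log_nonpos hc.le h), min_eq_right h,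
      exp_neg, exp_log hc]
    field_simp
  · rw [abs_of_nonpos (sub_nonpos.2 h), abs_of_nonneg (log_nonneg h), min_eq_left h,
      exp_log hc]
    ring

theorem abs_log_combo_sub_log_combo_le {c M s t : ℝ} (hc : 0 < c) (hcM : |log c| ≤ M)
    (hs : s ∈ Icc (0 : ℝ) 1) (ht : t ∈ Icc (0 : ℝ) 1) :
    |log (t + (1 - t) * c) - log (s + (1 - s) * c)| ≤ (exp M - 1) * |t - s| := by
  have hmin : ∀ u ∈ Icc (0 : ℝ) 1, min 1 c ≤ u + (1 - u) * c := fun u hu => by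
    simpa using min_le_mul_add_one_sub_mul (a := 1) (b := c) hu
  calc |log (t + (1 - t) * c) - log (s + (1 - s) * c)|
      ≤ |(t + (1 - t) * c) - (s + (1 - s) * c)| / min 1 c :=
        abs_log_sub_log_le_of_le (lt_min one_pos hc) (hmin t ht) (hmin s hs)
    _ = (exp |log c| - 1) * |t - s| := by
        rw [show (t + (1 - t) * c) - (s + (1 - s) * c) = (t - s) * (1 - c) by ring, abs_mul,
          abs_one_sub_eq_mul_min hc]
        field_simp
    _ ≤ (exp M - 1) * |t - s| := by gcongr

theorem deriv_mul_add_one_sub_mul {f h : ℝ → ℝ} (hf : Differentiable ℝ f)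
    (hh : Differentiable ℝ h) (t x : ℝ) :
    deriv (fun x => t * h x + (1 - t) * f x) x = t * deriv h x + (1 - t) * deriv f x :=
  (((hh x).hasDerivAt.const_mul t).add ((hf x).hasDerivAt.const_mul (1 - t))).deriv

namespace IsC1CircleLift

variable {f h : ℝ → ℝ}

theorem differentiable (hf : IsC1CircleLift f) : Differentiable ℝ f :=
  hf.1.differentiable one_ne_zero

theorem id : IsC1CircleLift fun x => x :=
  ⟨contDiff_id, fun _ => rfl, fun x => by simp⟩

theorem combo (hh : IsC1CircleLift h) (hf : IsC1CircleLift f) {t : ℝ} (ht : t ∈ Icc (0 : ℝ) 1) :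
    IsC1CircleLift fun x => t * h x + (1 - t) * f x := by
  refine ⟨(contDiff_const.mul hh.1).add (contDiff_const.mul hf.1), fun x => ?_, fun x => ?_⟩
  · simp only [hh.2.1 x, hf.2.1 x]
    ring
  · rw [deriv_mul_add_one_sub_mul hf.differentiable hh.differentiable]
    exact (lt_min (hh.2.2 x) (hf.2.2 x)).trans_le (min_le_mul_add_one_sub_mul ht)

end IsC1CircleLift

theorem circle_interpolation_log_deriv_estimate_general
    (f : ℝ → ℝ) (hf : ContDiff ℝ 1 f)
    (hlift : ∀ x : ℝ, f (x + 1) = f x + 1)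
    (hpos : ∀ x : ℝ, 0 < deriv f x)
    (M : ℝ)
    (hbd : ∀ x : ℝ, |Real.log (deriv f x)| ≤ M)
    (g : ℝ → ℝ → ℝ)
    (hg : ∀ t x : ℝ, g t x = t * x + (1 - t) * f x) :
    (∀ t ∈ Set.Icc (0:ℝ) 1,
        ContDiff ℝ 1 (g t) ∧ (∀ x : ℝ, g t (x + 1) = g t x + 1) ∧
        ∀ x : ℝ, 0 < deriv (g t) x) ∧
      ∀ s ∈ Set.Icc (0:ℝ) 1, ∀ t ∈ Set.Icc (0:ℝ) 1,
        (⨆ x : ℝ, |Real.log (deriv (g t) x) - Real.log (deriv (g s) x)|) ≤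
          (Real.exp M - 1) * |t - s| := by
  have hf' : IsC1CircleLift f := ⟨hf, hlift, hpos⟩
  have hgt : ∀ t, g t = fun x => t * x + (1 - t) * f x := fun t => funext (hg t)
  have hderiv : ∀ t x, deriv (g t) x = t + (1 - t) * deriv f x := fun t x => by
    rw [hgt, deriv_mul_add_one_sub_mul hf'.differentiable IsC1CircleLift.id.differentiable]
    simp
  refine ⟨fun t ht => ?_, fun s hs t ht => ciSup_le fun x => ?_⟩
  · rw [hgt t]
    exact IsC1CircleLift.id.combo hf' ht
  · rw [hderiv, hderiv]
    exact abs_log_combo_sub_log_combo_le (hpos x) (hbd x) hs ht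

/-- The interpolation estimate in the appendix theorem: the straight-line path from a
C¹ circle lift f to the identity moves with controlled speed in the pseudometric
d(f,g) = sup |log f' − log g'|. -/
theorem circle_interpolation_log_deriv_estimate
    (f : ℝ → ℝ) (hf : ContDiff ℝ 1 f)
    (hlift : ∀ x : ℝ, f (x + 1) = f x + 1)
    (hpos : ∀ x : ℝ, 0 < deriv f x)
    (M : ℝ) (hM : 0 ≤ M)
    (hbd : ∀ x : ℝ, |Real.log (deriv f x)| ≤ M)
    (g : ℝ → ℝ → ℝ)
    (hg : ∀ t x : ℝ, g t x = t * x + (1 - t) * f x) :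
    (∀ t ∈ Set.Icc (0:ℝ) 1,
        ContDiff ℝ 1 (g t) ∧ (∀ x : ℝ, g t (x + 1) = g t x + 1) ∧
        ∀ x : ℝ, 0 < deriv (g t) x) ∧
      ∀ s ∈ Set.Icc (0:ℝ) 1, ∀ t ∈ Set.Icc (0:ℝ) 1,
        (⨆ x : ℝ, |Real.log (deriv (g t) x) - Real.log (deriv (g s) x)|) ≤
          (Real.exp M - 1) * |t - s| :=
  circle_interpolation_log_deriv_estimate_general f hf hlift hpos M hbd g hg
end

section
/- Let f, g : ℝ → ℝ be C^1 circle lifts, and define h : ℝ → ℝ by h x = log(deriv f x) − log(deriv g x). Then sup_{x ∈ [0,1]} |h x − h 0| ≤ 2 · sup_{x ∈ [0,1]} |h x|, and sup_{x ∈ [0,1]} |h x| ≤ 2 · sup_{x ∈ [0,1]} |h x − h 0|. -/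
/-!
Both lifts advance by 1 over [0, 1], so by Cauchy's mean value theorem their derivatives agree at
some point c ∈ [0, 1], where h c = 0. Both inequalities are then the triangle inequality:
|h x - h 0| ≤ |h x| + |h 0|, and |h x| ≤ |h x - h 0| + |h c - h 0|.
-/

open Set

theorem exists_mem_Ioo_deriv_eq_deriv_of_sub_eq {f g : ℝ → ℝ} {a b : ℝ} (hab : a < b)
    (hfc : ContinuousOn f (Icc a b)) (hfd : DifferentiableOn ℝ f (Ioo a b))
    (hgc : ContinuousOn g (Icc a b)) (hgd : DifferentiableOn ℝ g (Ioo a b))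
    (hfg : f b - f a = g b - g a) (hne : g b - g a ≠ 0) :
    ∃ c ∈ Ioo a b, deriv f c = deriv g c := by
  obtain ⟨c, hc, hcauchy⟩ := exists_ratio_deriv_eq_ratio_slope f hab hfc hfd g hgc hgd
  rw [← hfg] at hcauchy hne
  exact ⟨c, hc, mul_left_cancel₀ hne hcauchy⟩

section iSup

variable {ι : Type*} [Nonempty ι] (u : ι → ℝ)

theorem iSup_abs_sub_le_two_mul_iSup_abs (hu : BddAbove (range fun i => |u i|)) (i₀ : ι) :
    ⨆ i, |u i - u i₀| ≤ 2 * ⨆ i, |u i| :=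
  ciSup_le fun i => calc
    |u i - u i₀| ≤ |u i| + |u i₀| := abs_sub _ _
    _ ≤ (⨆ j, |u j|) + ⨆ j, |u j| := add_le_add (le_ciSup hu i) (le_ciSup hu i₀)
    _ = 2 * ⨆ j, |u j| := (two_mul _).symm

theorem iSup_abs_le_two_mul_iSup_abs_sub (i₀ : ι) (hu : BddAbove (range fun i => |u i - u i₀|))
    {i₁ : ι} (hi₁ : u i₁ = 0) :
    ⨆ i, |u i| ≤ 2 * ⨆ i, |u i - u i₀| :=
  ciSup_le fun i => calc
    |u i| ≤ |u i - u i₀| + |u i₁ - u i₀| := by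
      rw [hi₁, zero_sub, abs_neg]
      exact sub_le_iff_le_add.1 (abs_sub_abs_le_abs_sub _ _)
    _ ≤ (⨆ j, |u j - u i₀|) + ⨆ j, |u j - u i₀| := add_le_add (le_ciSup hu i) (le_ciSup hu i₁)
    _ = 2 * ⨆ j, |u j - u i₀| := (two_mul _).symm

end iSup

/-- Bi-Lipschitz equivalence of the pseudometric d(f,g) = sup|log f' − log g'| and the
metric σ(f,g) = sup|(log f' − log f'(0)) − (log g' − log g'(0))| on Diff¹₊(S¹). -/
theorem log_deriv_sup_biLipschitz
    (f g : ℝ → ℝ) (hf : ContDiff ℝ 1 f) (hg : ContDiff ℝ 1 g)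
    (hliftf : ∀ x : ℝ, f (x + 1) = f x + 1)
    (hliftg : ∀ x : ℝ, g (x + 1) = g x + 1)
    (hposf : ∀ x : ℝ, 0 < deriv f x)
    (hposg : ∀ x : ℝ, 0 < deriv g x)
    (h : ℝ → ℝ)
    (hh : ∀ x : ℝ, h x = Real.log (deriv f x) - Real.log (deriv g x)) :
    (⨆ x : Set.Icc (0:ℝ) 1, |h x - h 0|) ≤ 2 * ⨆ x : Set.Icc (0:ℝ) 1, |h x| ∧
      (⨆ x : Set.Icc (0:ℝ) 1, |h x|) ≤ 2 * ⨆ x : Set.Icc (0:ℝ) 1, |h x - h 0| := by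
  have hcont : Continuous fun x : Icc (0:ℝ) 1 => h x := by
    rw [funext hh]
    exact (((hf.continuous_deriv le_rfl).log fun x => (hposf x).ne').sub
      ((hg.continuous_deriv le_rfl).log fun x => (hposg x).ne')).comp continuous_subtype_val
  have hf₁ : f 1 - f 0 = 1 := sub_eq_of_eq_add' (by simpa using hliftf 0)
  have hg₁ : g 1 - g 0 = 1 := sub_eq_of_eq_add' (by simpa using hliftg 0)
  obtain ⟨c, hc, hfgc⟩ := exists_mem_Ioo_deriv_eq_deriv_of_sub_eq one_pos
    hf.continuous.continuousOn (hf.differentiable one_ne_zero).differentiableOn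
    hg.continuous.continuousOn (hg.differentiable one_ne_zero).differentiableOn
    (hf₁.trans hg₁.symm) (hg₁.trans_ne one_ne_zero)
  let o : Icc (0:ℝ) 1 := ⟨0, left_mem_Icc.2 zero_le_one⟩
  refine ⟨iSup_abs_sub_le_two_mul_iSup_abs _ (isCompact_range hcont.abs).bddAbove o,
    iSup_abs_le_two_mul_iSup_abs_sub _ o (isCompact_range (hcont.sub continuous_const).abs).bddAbove
      (i₁ := ⟨c, Ioo_subset_Icc_self hc⟩) ?_⟩
  rw [hh, hfgc, sub_self]
end

section
/- Let f, g : ℝ → ℝ be twice continuously differentiable with f 0 = g 0 = 0, f 1 = g 1 = 1, deriv f x > 0 and deriv g x > 0 for all x ∈ [0,1]. If deriv (deriv f) x / deriv f x = deriv (deriv g) x / deriv g x for all x ∈ [0,1], then f x = g x for all x ∈ [0,1]. -/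
/-!
The hypothesis says that `f'` and `g'` have the same logarithmic derivative on `[0, 1]`, so
`f' = z • g'` there for a constant `z`. Integrating from `0` gives `f = z • g` on `[0, 1]`, and the
normalisation `f 1 = g 1 = 1` forces `z = 1`.
-/

open Set

/-- The interior version `logDeriv_eqOn_iff` extends to the closed interval by continuity. -/
theorem exists_eqOn_Icc_smul_of_logDeriv_eqOn_Ioo {u v : ℝ → ℝ} {a b : ℝ} (hab : a < b)
    (hu : ContinuousOn u (Icc a b)) (hv : ContinuousOn v (Icc a b))
    (hu' : DifferentiableOn ℝ u (Ioo a b)) (hv' : DifferentiableOn ℝ v (Ioo a b))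
    (hu0 : ∀ x ∈ Ioo a b, u x ≠ 0) (hv0 : ∀ x ∈ Ioo a b, v x ≠ 0)
    (h : EqOn (logDeriv u) (logDeriv v) (Ioo a b)) :
    ∃ z : ℝ, EqOn u (z • v) (Icc a b) := by
  obtain ⟨z, -, hz⟩ :=
    (logDeriv_eqOn_iff hu' hv' isOpen_Ioo isPreconnected_Ioo hv0 hu0).1 h
  exact ⟨z, hz.of_subset_closure hu (hv.const_smul z) Ioo_subset_Icc_self
    (closure_Ioo hab.ne).ge⟩

theorem eqOn_Icc_of_eqOn_deriv {f g : ℝ → ℝ} {a b : ℝ}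
    (hf : ∀ x ∈ Icc a b, DifferentiableAt ℝ f x) (hg : ∀ x ∈ Icc a b, DifferentiableAt ℝ g x)
    (h : EqOn (deriv f) (deriv g) (Icc a b)) (ha : f a = g a) :
    EqOn f g (Icc a b) :=
  eq_of_has_deriv_right_eq
    (fun x hx => (hf x (Ico_subset_Icc_self hx)).hasDerivAt.hasDerivWithinAt)
    (fun x hx => h (Ico_subset_Icc_self hx) ▸
      (hg x (Ico_subset_Icc_self hx)).hasDerivAt.hasDerivWithinAt)
    (fun x hx => (hf x hx).continuousAt.continuousWithinAt)
    (fun x hx => (hg x hx).continuousAt.continuousWithinAt) ha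

/-- Injectivity of the nonlinearity map Φ(f) = f''/f' on diffeomorphisms of [0,1]. -/
theorem nonlinearity_injective_on_interval
    (f g : ℝ → ℝ) (hf : ContDiff ℝ 2 f) (hg : ContDiff ℝ 2 g)
    (hf0 : f 0 = 0) (hg0 : g 0 = 0) (hf1 : f 1 = 1) (hg1 : g 1 = 1)
    (hposf : ∀ x ∈ Set.Icc (0:ℝ) 1, 0 < deriv f x)
    (hposg : ∀ x ∈ Set.Icc (0:ℝ) 1, 0 < deriv g x)
    (heq : ∀ x ∈ Set.Icc (0:ℝ) 1,
      deriv (deriv f) x / deriv f x = deriv (deriv g) x / deriv g x) :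
    ∀ x ∈ Set.Icc (0:ℝ) 1, f x = g x := by
  obtain ⟨z, hz⟩ := exists_eqOn_Icc_smul_of_logDeriv_eqOn_Ioo zero_lt_one
    (hf.continuous_deriv (by norm_num)).continuousOn
    (hg.continuous_deriv (by norm_num)).continuousOn
    hf.differentiable_deriv_two.differentiableOn hg.differentiable_deriv_two.differentiableOn
    (fun x hx => (hposf x (Ioo_subset_Icc_self hx)).ne')
    (fun x hx => (hposg x (Ioo_subset_Icc_self hx)).ne')
    (fun x hx => heq x (Ioo_subset_Icc_self hx))
  have hfg : EqOn f (z • g) (Icc 0 1) :=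
    eqOn_Icc_of_eqOn_deriv (fun x _ => hf.differentiable (by norm_num) x)
      (fun x _ => (hg.differentiable (by norm_num) x).const_smul z)
      (fun x hx => by rw [deriv_const_smul_field z]; exact hz hx) (by simp [hf0, hg0])
  have hz1 : 1 = z := by simpa [hf1, hg1] using hfg (right_mem_Icc.2 zero_le_one)
  intro x hx
  simpa [← hz1] using hfg hx
end

section
/- Let H : ℝ → ℝ be continuous. Define F x = ∫_0^x H t dt, C = ∫_0^1 exp(F t) dt, and f x = C⁻¹ · ∫_0^x exp(F t) dt. Then: (i) f 0 = 0 and f 1 = 1; (ii) f is twice continuously differentiable with deriv f x = exp(F x)/C > 0 for all x; (iii) deriv (deriv f) x / deriv f x = H x for all x; and (iv) if ∫_0^1 H t dt = 0, then deriv f 0 = deriv f 1. -/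
open intervalIntegral

/-!
With `F` a primitive of `H`, the function `exp ∘ F` is positive and its logarithmic derivative is
`F' = H`. Hence `f`, the primitive of `exp ∘ F` normalised by its total mass `C` on `[0, 1]`, is a
`C²` increasing map with `f(0) = 0`, `f(1) = 1` and `f''/f' = H`. Since `f' = exp ∘ F / C` and
`F(1) - F(0) = ∫₀¹ H`, the endpoint derivatives agree when `∫₀¹ H = 0`.
-/

theorem ContDiff.integral_primitive {E : Type*} [NormedAddCommGroup E] [NormedSpace ℝ E]
    [CompleteSpace E] {g : ℝ → E} {n : ℕ∞} (hg : ContDiff ℝ n g) (a : ℝ) :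
    ContDiff ℝ (n + 1) fun x => ∫ t in a..x, g t := by
  have hcont := hg.continuous
  refine contDiff_succ_iff_deriv.2
    ⟨fun x => (hcont.integral_hasStrictDerivAt a x).hasDerivAt.differentiableAt, by simp, ?_⟩
  rwa [funext (Continuous.deriv_integral g hcont a)]

theorem logDeriv_exp_comp {F : ℝ → ℝ} {x : ℝ} (hF : DifferentiableAt ℝ F x) :
    logDeriv (fun y => Real.exp (F y)) x = deriv F x := by
  rw [← Function.comp_def, logDeriv_comp Real.differentiableAt_exp hF, Real.logDeriv_exp,
    Pi.one_apply, one_mul]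

/-- Surjectivity of the nonlinearity map: every continuous H is the nonlinearity f''/f'
of an orientation-preserving diffeomorphism f of [0,1], and ∫₀¹ H = 0 forces
f'(0) = f'(1). -/
theorem nonlinearity_surjective
    (H : ℝ → ℝ) (hH : Continuous H)
    (F : ℝ → ℝ) (hF : ∀ x : ℝ, F x = ∫ t in (0:ℝ)..x, H t)
    (C : ℝ) (hC : C = ∫ t in (0:ℝ)..1, Real.exp (F t))
    (f : ℝ → ℝ) (hf : ∀ x : ℝ, f x = C⁻¹ * ∫ t in (0:ℝ)..x, Real.exp (F t)) :
    f 0 = 0 ∧ f 1 = 1 ∧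
    ContDiff ℝ 2 f ∧
    (∀ x : ℝ, deriv f x = Real.exp (F x) / C ∧ 0 < deriv f x) ∧
    (∀ x : ℝ, deriv (deriv f) x / deriv f x = H x) ∧
    ((∫ t in (0:ℝ)..1, H t) = 0 → deriv f 0 = deriv f 1) := by
  have hF_deriv (x : ℝ) : HasDerivAt F (H x) x := by
    rw [funext hF]; exact (hH.integral_hasStrictDerivAt 0 x).hasDerivAt
  have hF_smooth : ContDiff ℝ 1 F := by
    rw [funext hF]; simpa using (contDiff_zero.2 hH).integral_primitive 0
  have hexpF : Continuous fun t => Real.exp (F t) := hF_smooth.continuous.rexp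
  have hC_pos : 0 < C := hC ▸ intervalIntegral_pos_of_pos_on (hexpF.intervalIntegrable 0 1)
    (fun x _ => Real.exp_pos (F x)) zero_lt_one
  have hderiv : deriv f = fun x => Real.exp (F x) / C := by
    rw [funext hf, deriv_const_mul_field', funext (Continuous.deriv_integral _ hexpF 0)]
    simp only [div_eq_inv_mul]
  refine ⟨by simp [hf], by rw [hf, ← hC, inv_mul_cancel₀ hC_pos.ne'], ?_,
    fun x => ⟨congrFun hderiv x, by rw [hderiv]; positivity⟩, fun x => ?_, fun hH_mean => ?_⟩
  · rw [funext hf]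
    exact contDiff_const.mul (hF_smooth.exp.integral_primitive 0)
  · change logDeriv (deriv f) x = H x
    simp_rw [hderiv, div_eq_mul_inv]
    rw [logDeriv_mul_const _ _ (inv_ne_zero hC_pos.ne'),
      logDeriv_exp_comp (hF_deriv x).differentiableAt, (hF_deriv x).deriv]
  · have hF_ends : F 0 = F 1 := by rw [hF, hF, hH_mean, integral_same]
    simp only [hderiv, hF_ends]
end

section
/- Let f, g : ℝ → ℝ be C^2 circle lifts. If deriv (deriv f) x / deriv f x = deriv (deriv g) x / deriv g x for all x ∈ ℝ, then there exists a constant c ∈ ℝ such that f x = g x + c for all x ∈ ℝ. -/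
/-!
Writing `f'' / f'` as the logarithmic derivative of `f'`, equal nonlinearities make `f' / g'`
constant, so `f' = k g'` and hence `f = k g + c`. Evaluating at `0` and `1`, the lift
property `f (x + 1) = f x + 1` forces `k = 1`.
-/

section

variable {𝕜 : Type*} [RCLike 𝕜]

theorem exists_eq_const_mul_of_logDeriv_eq {u v : 𝕜 → 𝕜} (hu : Differentiable 𝕜 u)
    (hv : Differentiable 𝕜 v) (hu0 : ∀ x, u x ≠ 0) (hv0 : ∀ x, v x ≠ 0)
    (h : ∀ x, logDeriv u x = logDeriv v x) : ∃ k, ∀ x, u x = k * v x := by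
  have hquot : ∀ x, deriv (u / v) x = 0 := by
    intro x
    have hcross : deriv u x * v x = u x * deriv v x := by
      simpa only [logDeriv_apply, div_eq_div_iff (hu0 x) (hv0 x), mul_comm (u x)] using h x
    rw [deriv_div (hu x) (hv x) (hv0 x), hcross, sub_self, zero_div]
  refine ⟨u 0 / v 0, fun x => ?_⟩
  rw [← div_mul_cancel₀ (u x) (hv0 x)]
  exact congrArg (· * v x) (is_const_of_deriv_eq_zero (hu.div hv hv0) hquot x 0)

theorem exists_eq_const_mul_add_of_deriv_eq_const_mul {f g : 𝕜 → 𝕜} {k : 𝕜}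
    (hf : Differentiable 𝕜 f) (hg : Differentiable 𝕜 g) (h : ∀ x, deriv f x = k * deriv g x) :
    ∃ c, ∀ x, f x = k * g x + c := by
  obtain ⟨c, hc⟩ := isOpen_univ.exists_eq_add_of_deriv_eq isPreconnected_univ
    hf.differentiableOn (hg.const_mul k).differentiableOn
    fun x _ => by rw [h x, deriv_const_mul k (hg x)]
  exact ⟨c, fun x => hc (Set.mem_univ x)⟩

end

/-- Kernel computation in Lemma 4.1: two circle lifts with equal nonlinearity f''/f'
differ by a constant (a rigid rotation). -/
theorem eq_nonlinearity_implies_rotation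
    (f g : ℝ → ℝ) (hf : ContDiff ℝ 2 f) (hg : ContDiff ℝ 2 g)
    (hliftf : ∀ x : ℝ, f (x + 1) = f x + 1)
    (hliftg : ∀ x : ℝ, g (x + 1) = g x + 1)
    (hposf : ∀ x : ℝ, 0 < deriv f x)
    (hposg : ∀ x : ℝ, 0 < deriv g x)
    (heq : ∀ x : ℝ,
      deriv (deriv f) x / deriv f x = deriv (deriv g) x / deriv g x) :
    ∃ c : ℝ, ∀ x : ℝ, f x = g x + c := by
  obtain ⟨k, hk⟩ := exists_eq_const_mul_of_logDeriv_eq hf.differentiable_deriv_two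
    hg.differentiable_deriv_two (fun x => (hposf x).ne') (fun x => (hposg x).ne') heq
  obtain ⟨c, hc⟩ := exists_eq_const_mul_add_of_deriv_eq_const_mul
    (hf.differentiable two_ne_zero) (hg.differentiable two_ne_zero) hk
  have hk1 : k = 1 := by
    have h1 := hc 1
    rw [← zero_add (1 : ℝ), hliftf 0, hliftg 0, hc 0] at h1
    linarith
  exact ⟨c, fun x => by rw [hc x, hk1, one_mul]⟩
end
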